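/- arXiv:2003.12123 — 14 statements merged into one kernel-verified Lean document; each statement's English description precedes it below -/
import Mathlib

section
/- Let P be a natural unit interval order and let (a_p,…,a_1) and (b_q,…,b_1) be two adjacent columns of a P-tableau, with the a-column to the left of the b-column (so a_i is P-less-or-incomparable to b_i for each i ≤ min(p,q), and each column is a P-chain increasing upward, i.e. a_1 ≺_P a_2 ≺_P ⋯ and b_1 ≺_P b_2 ≺_P ⋯). Then: if a_i > b_j then i ≥ j. -/
/-- `a` and `b` are incomparable with respect to the strict relation `P`. -/
def Incomp (P : ℕ → ℕ → Prop) (a b : ℕ) : Prop :=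
  a ≠ b ∧ ¬ P a b ∧ ¬ P b a

/-- `P` is a natural unit interval order on `[1,n]`. -/
def NUIO (n : ℕ) (P : ℕ → ℕ → Prop) : Prop :=
  (∀ a, ¬ P a a) ∧
  (∀ a b c, P a b → P b c → P a c) ∧
  (∀ a b, P a b → a < b) ∧
  (∀ a b c, a ∈ Finset.Icc 1 n → b ∈ Finset.Icc 1 n → c ∈ Finset.Icc 1 n →
    b < c → P b c → Incomp P a b → Incomp P a c → b < a ∧ a < c)

/-- Adjacent columns of a P-tableau (a-column on the left, entries listed top to bottom,
increasing downward with respect to P): if a_i > b_j then i ≥ j. -/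
theorem stmt4 (n p q : ℕ) (P : ℕ → ℕ → Prop) (hP : NUIO n P)
    (a b : ℕ → ℕ)
    (hadom : ∀ i, 1 ≤ i → i ≤ p → a i ∈ Finset.Icc 1 n)
    (hbdom : ∀ j, 1 ≤ j → j ≤ q → b j ∈ Finset.Icc 1 n)
    (hacol : ∀ i, 1 ≤ i → i + 1 ≤ p → P (a i) (a (i + 1)))
    (hbcol : ∀ j, 1 ≤ j → j + 1 ≤ q → P (b j) (b (j + 1)))
    (hrow : ∀ i, 1 ≤ i → i ≤ p → i ≤ q → ¬ P (b i) (a i)) :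
    ∀ i j, 1 ≤ i → i ≤ p → 1 ≤ j → j ≤ q → b j < a i → j ≤ i := by
  obtain ⟨hirr, htrans, hlt, hnu⟩ := hP
  -- chain lemma for b
  have hchain : ∀ j i, 1 ≤ i → i < j → j ≤ q → P (b i) (b j) := by
    intro j
    induction j with
    | zero => intro i _ h; omega
    | succ k ih =>
      intro i hi hik hkq
      rcases Nat.lt_or_ge i k with h | h
      · exact htrans _ _ _ (ih i hi h (by omega)) (hbcol k (by omega) hkq)
      · have : i = k := by omega
        subst this
        exact hbcol i hi hkq
  intro i j hi hip hj hjq hba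
  by_contra hji
  push_neg at hji
  have hiq : i ≤ q := by omega
  have hbij : P (b i) (b j) := hchain j i hi hji hjq
  have hbiltbj : b i < b j := hlt _ _ hbij
  have hrowi : ¬ P (b i) (a i) := hrow i hi hip hiq
  have hai : a i ∈ Finset.Icc 1 n := hadom i hi hip
  have hbi : b i ∈ Finset.Icc 1 n := hbdom i hi hiq
  have hbj : b j ∈ Finset.Icc 1 n := hbdom j hj hjq
  -- a i vs b i
  by_cases hab : P (a i) (b i)
  · exact absurd (lt_trans (hlt _ _ hab) hbiltbj) (by omega)
  by_cases heq : a i = b i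
  · omega
  -- incomparable a i, b i
  have hinc1 : Incomp P (a i) (b i) := ⟨heq, hab, hrowi⟩
  by_cases hab2 : P (a i) (b j)
  · exact absurd (hlt _ _ hab2) (by omega)
  by_cases hba2 : P (b j) (a i)
  · exact hrowi (htrans _ _ _ hbij hba2)
  have heq2 : a i ≠ b j := by omega
  have hinc2 : Incomp P (a i) (b j) := ⟨heq2, hab2, hba2⟩
  have := hnu (a i) (b i) (b j) hai hbi hbj hbiltbj hbij hinc1 hinc2
  omega
end

section
/- Let P be a natural unit interval order and let (a_p,…,a_1), (b_q,…,b_1) be adjacent columns of a P-tableau with the a-column on the left. If b_j ≺_P a_i then i > j, and if i < j then a_i < b_j. -/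
/-- Adjacent columns of a P-tableau (a-column on the left): if b_j ≺_P a_i then i > j,
and if i < j then a_i < b_j. -/
theorem stmt5 (n p q : ℕ) (P : ℕ → ℕ → Prop) (hP : NUIO n P)
    (a b : ℕ → ℕ)
    (hadom : ∀ i, 1 ≤ i → i ≤ p → a i ∈ Finset.Icc 1 n)
    (hbdom : ∀ j, 1 ≤ j → j ≤ q → b j ∈ Finset.Icc 1 n)
    (hacol : ∀ i, 1 ≤ i → i + 1 ≤ p → P (a i) (a (i + 1)))
    (hbcol : ∀ j, 1 ≤ j → j + 1 ≤ q → P (b j) (b (j + 1)))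
    (hrow : ∀ i, 1 ≤ i → i ≤ p → i ≤ q → ¬ P (b i) (a i)) :
    (∀ i j, 1 ≤ i → i ≤ p → 1 ≤ j → j ≤ q → P (b j) (a i) → j < i) ∧
    (∀ i j, 1 ≤ i → i ≤ p → 1 ≤ j → j ≤ q → i < j → a i < b j) := by

  obtain ⟨hirr, htrans, hlt, hquad⟩ := hP
  have chain : ∀ j i, 1 ≤ i → i < j → j ≤ q → P (b i) (b j) := by
    intro j
    induction j with
    | zero => omega
    | succ k ih =>
      intro i h1 hij hj
      rcases eq_or_lt_of_le (Nat.lt_succ_iff.mp hij) with he | hl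
      · subst he; exact hbcol i h1 hj
      · exact htrans _ _ _ (ih i h1 hl (by omega)) (hbcol k (by omega) hj)
  have part1 : ∀ i j, 1 ≤ i → i ≤ p → 1 ≤ j → j ≤ q → P (b j) (a i) → j < i := by
    intro i j h1 h2 h3 h4 hba
    by_contra h
    push_neg at h
    apply hrow i h1 h2 (le_trans h h4)
    rcases eq_or_lt_of_le h with he | hl
    · subst he; exact hba
    · exact htrans _ _ _ (chain j i h1 hl h4) hba
  refine ⟨part1, ?_⟩
  intro i j h1 h2 h3 h4 hij
  by_cases hab : P (a i) (b j)
  · exact hlt _ _ hab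
  by_cases hba : P (b j) (a i)
  · exact absurd (part1 i j h1 h2 h3 h4 hba) (by omega)
  obtain ⟨k, rfl⟩ : ∃ k, j = k + 1 := ⟨j - 1, by omega⟩
  have hk1 : 1 ≤ k := by omega
  have hkq : k ≤ q := by omega
  have hbk : P (b k) (b (k + 1)) := hbcol k hk1 h4
  have hne2 : a i ≠ b (k + 1) := by
    intro he
    have := part1 i k h1 h2 hk1 hkq (he ▸ hbk)
    omega
  have hnP2 : ¬ P (b k) (a i) := by
    intro hc
    have := part1 i k h1 h2 hk1 hkq hc
    omega
  have hne1 : a i ≠ b k := by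
    intro he
    exact hab (he ▸ hbk)
  have hnP1 : ¬ P (a i) (b k) := fun hc => hab (htrans _ _ _ hc hbk)
  exact (hquad (a i) (b k) (b (k + 1)) (hadom i h1 h2) (hbdom k hk1 hkq)
    (hbdom (k + 1) h3 h4) (hlt _ _ hbk) hbk ⟨hne1, hnP1, hnP2⟩ ⟨hne2, hab, hba⟩).2
end

section
/- Let P be a natural unit interval order on [1,n] and let y_1 < y_2 < … < y_k be elements forming a ladder in P (i.e., y_i and y_{i+1} are P-incomparable for consecutive indices, and y_i ≺_P y_j whenever j − i ≥ 2). If x satisfies ¬(x ≺_P y_1) and x ≺_P y_2, then {x, y_1, …, y_k} is again a ladder in P. -/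
/-- The elements `y 1 < y 2 < … < y k` form a ladder in `P`: consecutive elements are
incomparable, elements at distance at least 2 are comparable. -/
def LadderEnum (P : ℕ → ℕ → Prop) (k : ℕ) (y : ℕ → ℕ) : Prop :=
  (∀ i j, 1 ≤ i → i < j → j ≤ k → y i < y j) ∧
  (∀ i, 1 ≤ i → i + 1 ≤ k → Incomp P (y i) (y (i + 1))) ∧
  (∀ i j, 1 ≤ i → i + 2 ≤ j → j ≤ k → P (y i) (y j))

/-- The finite set `A` is a ladder in `P`: listing its elements in increasing order,
consecutive elements are `P`-incomparable and elements at distance `≥ 2` satisfy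
the smaller `≺_P` the larger. -/
def IsLadderSet (P : ℕ → ℕ → Prop) (A : Finset ℕ) : Prop :=
  ∀ x ∈ A, ∀ y ∈ A, x < y →
    ((∀ z ∈ A, ¬ (x < z ∧ z < y)) → Incomp P x y) ∧
    ((∃ z ∈ A, x < z ∧ z < y) → P x y)

/-- If y_1 < … < y_k is a ladder in P, ¬(x ≺ y_1) and x ≺ y_2, then {x,y_1,…,y_k}
is again a ladder in P. -/
theorem stmt6 (n k : ℕ) (P : ℕ → ℕ → Prop) (hP : NUIO n P)
    (y : ℕ → ℕ) (x : ℕ)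
    (hydom : ∀ i, 1 ≤ i → i ≤ k → y i ∈ Finset.Icc 1 n)
    (hxdom : x ∈ Finset.Icc 1 n)
    (hk : 2 ≤ k) (hlad : LadderEnum P k y)
    (hx1 : ¬ P x (y 1)) (hx2 : P x (y 2)) :
    IsLadderSet P (insert x ((Finset.Icc 1 k).image y)) := by
  obtain ⟨hirr, htrans, hlt, hsemi⟩ := hP
  obtain ⟨hmono, hinc, hcomp⟩ := hlad
  have hle : ∀ i j, 1 ≤ i → i ≤ j → j ≤ k → y i ≤ y j := by
    intro i j h1 hij hj
    rcases eq_or_lt_of_le hij with h | h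
    · simp [h]
    · exact (hmono i j h1 h hj).le
  have h12 : Incomp P (y 1) (y 2) := hinc 1 le_rfl hk
  have hxne1 : x ≠ y 1 := by
    intro h; rw [h] at hx2; exact h12.2.1 hx2
  have hny1x : ¬ P (y 1) x := by
    intro h; exact h12.2.1 (htrans _ _ _ h hx2)
  have hixy1 : Incomp P x (y 1) := ⟨hxne1, hx1, hny1x⟩
  have hxlt1 : x < y 1 := by
    have := hsemi (y 1) x (y 2) (hydom 1 le_rfl (by omega)) hxdom
      (hydom 2 (by omega) hk) (hlt _ _ hx2) hx2
      ⟨Ne.symm hxne1, hny1x, hx1⟩ h12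
    exact this.1
  have hxPj : ∀ j, 2 ≤ j → j ≤ k → P x (y j) := by
    intro j h2 hjk
    rcases eq_or_lt_of_le h2 with h | h
    · rw [← h]; exact hx2
    · by_contra hnp
      have hxltj : x < y j := lt_trans hxlt1 (hmono 1 j le_rfl (by omega) hjk)
      have hnjx : ¬ P (y j) x := fun hp => absurd (hlt _ _ hp) (by omega)
      have hij : Incomp P x (y j) := ⟨Nat.ne_of_lt hxltj, hnp, hnjx⟩
      have := hsemi x (y 1) (y j) hxdom (hydom 1 le_rfl (by omega))
        (hydom j (by omega) hjk) (hmono 1 j le_rfl (by omega) hjk)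
        (hcomp 1 j le_rfl (by omega) hjk) hixy1 hij
      omega
  intro u hu v hv huv
  simp only [Finset.mem_insert, Finset.mem_image, Finset.mem_Icc] at hu hv
  have hxlei : ∀ i, 1 ≤ i → i ≤ k → x < y i := by
    intro i h1 hik
    exact lt_of_lt_of_le hxlt1 (hle 1 i le_rfl h1 hik)
  rcases hu with hu | ⟨i, ⟨hi1, hik⟩, rfl⟩
  · subst hu
    rcases hv with hv | ⟨j, ⟨hj1, hjk⟩, rfl⟩
    · omega
    · constructor
      · intro hnone
        have hj : j = 1 := by
          by_contra h
          have h2j : 2 ≤ j := by omega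
          exact hnone (y 1) (by
            simp only [Finset.mem_insert, Finset.mem_image, Finset.mem_Icc]
            exact Or.inr ⟨1, ⟨le_rfl, by omega⟩, rfl⟩)
            ⟨hxlt1, hmono 1 j le_rfl (by omega) hjk⟩
        rw [hj]; exact hixy1
      · rintro ⟨z, hz, hz1, hz2⟩
        have h2j : 2 ≤ j := by
          by_contra h
          have hj : j = 1 := by omega
          rw [hj] at hz2
          simp only [Finset.mem_insert, Finset.mem_image, Finset.mem_Icc] at hz
          rcases hz with rfl | ⟨m, ⟨hm1, hmk⟩, rfl⟩
          · omega
          · exact absurd (hle 1 m le_rfl hm1 hmk) (by omega)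
        exact hxPj j h2j hjk
  · rcases hv with hv | ⟨j, ⟨hj1, hjk⟩, rfl⟩
    · subst hv
      exact absurd (hxlei i hi1 hik) (by omega)
    · have hij : i < j := by
        by_contra h
        have : y j ≤ y i := hle j i hj1 (by omega) hik
        omega
      constructor
      · intro hnone
        have hj : j = i + 1 := by
          by_contra h
          have h2 : i + 2 ≤ j := by omega
          exact hnone (y (i + 1)) (by
            simp only [Finset.mem_insert, Finset.mem_image, Finset.mem_Icc]
            exact Or.inr ⟨i + 1, ⟨by omega, by omega⟩, rfl⟩)
            ⟨hmono i (i + 1) hi1 (by omega) (by omega),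
             hmono (i + 1) j (by omega) (by omega) hjk⟩
        rw [hj]; exact hinc i hi1 (by omega)
      · rintro ⟨z, hz, hz1, hz2⟩
        have h2 : i + 2 ≤ j := by
          by_contra h
          have hj : j = i + 1 := by omega
          rw [hj] at hz2
          simp only [Finset.mem_insert, Finset.mem_image, Finset.mem_Icc] at hz
          rcases hz with rfl | ⟨m, ⟨hm1, hmk⟩, rfl⟩
          · exact absurd (hxlei i hi1 hik) (by omega)
          · rcases le_or_gt m i with h' | h'
            · exact absurd (hle m i hm1 h' hik) (by omega)
            · exact absurd (hle (i + 1) m (by omega) h' hmk) (by omega)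
        exact hcomp i j hi1 h2 hjk
end

section
/- Let P be a natural unit interval order on [1,n] and let y_1 < … < y_k be a ladder in P. If y_i < x < y_{i+1} for some i, then x is P-incomparable to y_i and P-incomparable to y_{i+1}. -/
/-- If y_1 < … < y_k is a ladder in P and y_i < x < y_{i+1}, then x is P-incomparable
to both y_i and y_{i+1}. -/
theorem stmt7 (n k : ℕ) (P : ℕ → ℕ → Prop) (hP : NUIO n P)
    (y : ℕ → ℕ) (x : ℕ) (i : ℕ)
    (hydom : ∀ j, 1 ≤ j → j ≤ k → y j ∈ Finset.Icc 1 n)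
    (hxdom : x ∈ Finset.Icc 1 n)
    (hlad : LadderEnum P k y)
    (hi : 1 ≤ i) (hik : i + 1 ≤ k)
    (h1 : y i < x) (h2 : x < y (i + 1)) :
    Incomp P (y i) x ∧ Incomp P x (y (i + 1)) := by
  obtain ⟨hirr, htrans, hlt, hsemi⟩ := hP
  obtain ⟨hmono, hcons, hfar⟩ := hlad
  have hinc : Incomp P (y i) (y (i + 1)) := hcons i hi hik
  have hyidom := hydom i hi (le_trans (Nat.le_succ i) hik)
  have hyi1dom := hydom (i + 1) (le_trans hi (Nat.le_succ i)) hik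
  -- can't have P x (y i) or P (y (i+1)) x since P implies <
  have hnxyi : ¬ P x (y i) := fun h => absurd (hlt _ _ h) (not_lt.mpr (le_of_lt h1))
  have hnyi1x : ¬ P (y (i + 1)) x := fun h => absurd (hlt _ _ h) (not_lt.mpr (le_of_lt h2))
  -- can't have both P (y i) x and P x (y (i+1))
  have hnotboth : ¬ (P (y i) x ∧ P x (y (i + 1))) := fun ⟨ha, hb⟩ =>
    hinc.2.1 (htrans _ _ _ ha hb)
  have hA : ¬ P (y i) x := by
    intro hA
    have hincx1 : Incomp P x (y (i + 1)) := ⟨Nat.ne_of_lt h2, fun h => hnotboth ⟨hA, h⟩, hnyi1x⟩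
    have := hsemi (y (i + 1)) (y i) x hyi1dom hyidom hxdom h1 hA
      ⟨(hinc.1).symm, hinc.2.2, hinc.2.1⟩ ⟨hincx1.1.symm, hincx1.2.2, hincx1.2.1⟩
    exact absurd h2 (not_lt.mpr (le_of_lt this.2))
  have hB : ¬ P x (y (i + 1)) := by
    intro hB
    have hincix : Incomp P (y i) x := ⟨Nat.ne_of_lt h1, hA, hnxyi⟩
    have := hsemi (y i) x (y (i + 1)) hyidom hxdom hyi1dom h2 hB
      hincix hinc
    exact absurd h1 (not_lt.mpr (le_of_lt this.1))
  exact ⟨⟨Nat.ne_of_lt h1, hA, hnxyi⟩, ⟨Nat.ne_of_lt h2, hB, hnyi1x⟩⟩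
end

section
/- Let P be a partial order on [1,n] that is a natural unit interval order. Then no one is climbing a ladder in P (there exist no x and ladder {y_1,…,y_k} in P with x ∉ {y_1,…,y_k} and y_1 ≺_P x ≺_P y_k) if and only if P avoids both P_{(3,1,1),5} and P_{(4,2,1,1),6} as induced suborders. -/
/-- `P` (on `[1,n]`) avoids the labeled order `Q` on `[1,m]`: no `m`-element subset of
`[1,n]`, with the induced order and increasing labeling, is isomorphic to `Q`. -/
def Avoids (n : ℕ) (P : ℕ → ℕ → Prop) (m : ℕ) (Q : ℕ → ℕ → Prop) : Prop :=
  ¬ ∃ f : ℕ → ℕ,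
    (∀ i, i ∈ Finset.Icc 1 m → f i ∈ Finset.Icc 1 n) ∧
    (∀ i j, i ∈ Finset.Icc 1 m → j ∈ Finset.Icc 1 m → i < j → f i < f j) ∧
    (∀ i j, i ∈ Finset.Icc 1 m → j ∈ Finset.Icc 1 m → (Q i j ↔ P (f i) (f j)))

/-- The order `P_{(3,1,1),5}` on `[1,5]`. -/
def P311 (a b : ℕ) : Prop :=
  (a = 1 ∧ b = 3) ∨ (a = 1 ∧ b = 4) ∨ (a = 1 ∧ b = 5) ∨ (a = 2 ∧ b = 5) ∨ (a = 3 ∧ b = 5)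

/-- The order `P_{(4,2,1,1),6}` on `[1,6]`. -/
def P4211 (a b : ℕ) : Prop :=
  (a = 1 ∧ b = 3) ∨ (a = 1 ∧ b = 4) ∨ (a = 1 ∧ b = 5) ∨ (a = 1 ∧ b = 6) ∨
  (a = 2 ∧ b = 5) ∨ (a = 2 ∧ b = 6) ∨ (a = 3 ∧ b = 6) ∨ (a = 4 ∧ b = 6)

/-- Someone is climbing a ladder in P: there exist x and a ladder A with x outside A and
min(A) ≺_P x ≺_P max(A). -/
def Climbing (n : ℕ) (P : ℕ → ℕ → Prop) : Prop :=
  ∃ x : ℕ, ∃ A : Finset ℕ, x ∈ Finset.Icc 1 n ∧ A ⊆ Finset.Icc 1 n ∧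
    IsLadderSet P A ∧ x ∉ A ∧
    ∃ y1 ∈ A, ∃ yk ∈ A, (∀ z ∈ A, y1 ≤ z) ∧ (∀ z ∈ A, z ≤ yk) ∧ P y1 x ∧ P x yk

lemma rev_not {n : ℕ} {P : ℕ → ℕ → Prop} (hP : NUIO n P) {a b : ℕ} (h : a < b) : ¬ P b a :=
  fun hba => absurd (hP.2.2.1 _ _ hba) (by omega)

lemma witness5 (n : ℕ) (P : ℕ → ℕ → Prop) (hP : NUIO n P)
    (a1 a2 a3 a4 a5 : ℕ)
    (m1 : a1 ∈ Finset.Icc 1 n) (m2 : a2 ∈ Finset.Icc 1 n) (m3 : a3 ∈ Finset.Icc 1 n)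
    (m4 : a4 ∈ Finset.Icc 1 n) (m5 : a5 ∈ Finset.Icc 1 n)
    (o12 : a1 < a2) (o23 : a2 < a3) (o34 : a3 < a4) (o45 : a4 < a5)
    (p13 : P a1 a3) (p14 : P a1 a4) (p15 : P a1 a5) (p25 : P a2 a5) (p35 : P a3 a5)
    (n12 : ¬ P a1 a2) (n23 : ¬ P a2 a3) (n24 : ¬ P a2 a4) (n34 : ¬ P a3 a4) (n45 : ¬ P a4 a5) :
    ∃ f : ℕ → ℕ,
      (∀ i, i ∈ Finset.Icc 1 5 → f i ∈ Finset.Icc 1 n) ∧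
      (∀ i j, i ∈ Finset.Icc 1 5 → j ∈ Finset.Icc 1 5 → i < j → f i < f j) ∧
      (∀ i j, i ∈ Finset.Icc 1 5 → j ∈ Finset.Icc 1 5 → (P311 i j ↔ P (f i) (f j))) := by
  have d1 : ¬ P a1 a1 := hP.1 a1
  have d2 : ¬ P a2 a2 := hP.1 a2
  have d3 : ¬ P a3 a3 := hP.1 a3
  have d4 : ¬ P a4 a4 := hP.1 a4
  have d5 : ¬ P a5 a5 := hP.1 a5
  have q21 : ¬ P a2 a1 := rev_not hP (by omega)
  have q31 : ¬ P a3 a1 := rev_not hP (by omega)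
  have q41 : ¬ P a4 a1 := rev_not hP (by omega)
  have q51 : ¬ P a5 a1 := rev_not hP (by omega)
  have q32 : ¬ P a3 a2 := rev_not hP (by omega)
  have q42 : ¬ P a4 a2 := rev_not hP (by omega)
  have q52 : ¬ P a5 a2 := rev_not hP (by omega)
  have q43 : ¬ P a4 a3 := rev_not hP (by omega)
  have q53 : ¬ P a5 a3 := rev_not hP (by omega)
  have q54 : ¬ P a5 a4 := rev_not hP (by omega)
  refine ⟨fun i => if i = 1 then a1 else if i = 2 then a2 else if i = 3 then a3
      else if i = 4 then a4 else a5, ?_, ?_, ?_⟩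
  · intro i hi
    simp only [Finset.mem_Icc] at hi
    obtain ⟨hi1, hi2⟩ := hi
    interval_cases i <;>
      simp only [Finset.mem_Icc] at m1 m2 m3 m4 m5 ⊢ <;> norm_num <;> omega
  · intro i j hi hj hij
    simp only [Finset.mem_Icc] at hi hj
    obtain ⟨hi1, hi2⟩ := hi
    obtain ⟨hj1, hj2⟩ := hj
    interval_cases i <;> interval_cases j <;> simp <;> omega
  · intro i j hi hj
    simp only [Finset.mem_Icc] at hi hj
    obtain ⟨hi1, hi2⟩ := hi
    obtain ⟨hj1, hj2⟩ := hj
    interval_cases i <;> interval_cases j <;> simp [P311] <;> assumption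

lemma witness6 (n : ℕ) (P : ℕ → ℕ → Prop) (hP : NUIO n P)
    (a1 a2 a3 a4 a5 a6 : ℕ)
    (m1 : a1 ∈ Finset.Icc 1 n) (m2 : a2 ∈ Finset.Icc 1 n) (m3 : a3 ∈ Finset.Icc 1 n)
    (m4 : a4 ∈ Finset.Icc 1 n) (m5 : a5 ∈ Finset.Icc 1 n) (m6 : a6 ∈ Finset.Icc 1 n)
    (o12 : a1 < a2) (o23 : a2 < a3) (o34 : a3 < a4) (o45 : a4 < a5) (o56 : a5 < a6)
    (p13 : P a1 a3) (p14 : P a1 a4) (p15 : P a1 a5) (p16 : P a1 a6)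
    (p25 : P a2 a5) (p26 : P a2 a6) (p36 : P a3 a6) (p46 : P a4 a6)
    (n12 : ¬ P a1 a2) (n23 : ¬ P a2 a3) (n24 : ¬ P a2 a4) (n34 : ¬ P a3 a4)
    (n35 : ¬ P a3 a5) (n45 : ¬ P a4 a5) (n56 : ¬ P a5 a6) :
    ∃ f : ℕ → ℕ,
      (∀ i, i ∈ Finset.Icc 1 6 → f i ∈ Finset.Icc 1 n) ∧
      (∀ i j, i ∈ Finset.Icc 1 6 → j ∈ Finset.Icc 1 6 → i < j → f i < f j) ∧
      (∀ i j, i ∈ Finset.Icc 1 6 → j ∈ Finset.Icc 1 6 → (P4211 i j ↔ P (f i) (f j))) := by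
  have d1 : ¬ P a1 a1 := hP.1 a1
  have d2 : ¬ P a2 a2 := hP.1 a2
  have d3 : ¬ P a3 a3 := hP.1 a3
  have d4 : ¬ P a4 a4 := hP.1 a4
  have d5 : ¬ P a5 a5 := hP.1 a5
  have d6 : ¬ P a6 a6 := hP.1 a6
  have q21 : ¬ P a2 a1 := rev_not hP (by omega)
  have q31 : ¬ P a3 a1 := rev_not hP (by omega)
  have q41 : ¬ P a4 a1 := rev_not hP (by omega)
  have q51 : ¬ P a5 a1 := rev_not hP (by omega)
  have q61 : ¬ P a6 a1 := rev_not hP (by omega)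
  have q32 : ¬ P a3 a2 := rev_not hP (by omega)
  have q42 : ¬ P a4 a2 := rev_not hP (by omega)
  have q52 : ¬ P a5 a2 := rev_not hP (by omega)
  have q62 : ¬ P a6 a2 := rev_not hP (by omega)
  have q43 : ¬ P a4 a3 := rev_not hP (by omega)
  have q53 : ¬ P a5 a3 := rev_not hP (by omega)
  have q63 : ¬ P a6 a3 := rev_not hP (by omega)
  have q54 : ¬ P a5 a4 := rev_not hP (by omega)
  have q64 : ¬ P a6 a4 := rev_not hP (by omega)
  have q65 : ¬ P a6 a5 := rev_not hP (by omega)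
  refine ⟨fun i => if i = 1 then a1 else if i = 2 then a2 else if i = 3 then a3
      else if i = 4 then a4 else if i = 5 then a5 else a6, ?_, ?_, ?_⟩
  · intro i hi
    simp only [Finset.mem_Icc] at hi
    obtain ⟨hi1, hi2⟩ := hi
    interval_cases i <;>
      simp only [Finset.mem_Icc] at m1 m2 m3 m4 m5 m6 ⊢ <;> norm_num <;> omega
  · intro i j hi hj hij
    simp only [Finset.mem_Icc] at hi hj
    obtain ⟨hi1, hi2⟩ := hi
    obtain ⟨hj1, hj2⟩ := hj
    interval_cases i <;> interval_cases j <;> simp <;> omega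
  · intro i j hi hj
    simp only [Finset.mem_Icc] at hi hj
    obtain ⟨hi1, hi2⟩ := hi
    obtain ⟨hj1, hj2⟩ := hj
    interval_cases i <;> interval_cases j <;> simp [P4211] <;> assumption

lemma climb4 (n : ℕ) (P : ℕ → ℕ → Prop) (hP : NUIO n P) (b1 b2 b3 b4 x : ℕ)
    (m1 : b1 ∈ Finset.Icc 1 n) (m2 : b2 ∈ Finset.Icc 1 n) (m3 : b3 ∈ Finset.Icc 1 n)
    (m4 : b4 ∈ Finset.Icc 1 n) (mx : x ∈ Finset.Icc 1 n)
    (o12 : b1 < b2) (o2x : b2 < x) (ox3 : x < b3) (o34 : b3 < b4)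
    (p13 : P b1 b3) (p14 : P b1 b4) (p24 : P b2 b4)
    (n12 : ¬ P b1 b2) (n23 : ¬ P b2 b3) (n34 : ¬ P b3 b4)
    (px1 : P b1 x) (px4 : P x b4) : Climbing n P := by
  refine ⟨x, {b1, b2, b3, b4}, mx, ?_, ?_, ?_, b1, by simp, b4, by simp, ?_, ?_, px1, px4⟩
  · intro z hz
    simp only [Finset.mem_insert, Finset.mem_singleton] at hz
    rcases hz with rfl | rfl | rfl | rfl <;> assumption
  · intro a ha b hb hab
    simp only [Finset.mem_insert, Finset.mem_singleton] at ha hb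
    refine ⟨fun hno => ?_, fun hex => ?_⟩ <;>
      rcases ha with rfl | rfl | rfl | rfl <;> rcases hb with rfl | rfl | rfl | rfl <;>
      first
        | exact absurd hab (by omega)
        | exact ⟨by omega, by assumption, rev_not hP (by omega)⟩
        | assumption
        | (exfalso; exact hno b2 (by simp) ⟨by omega, by omega⟩)
        | (exfalso; exact hno b3 (by simp) ⟨by omega, by omega⟩)
        | (exfalso; obtain ⟨z, hz, hz1, hz2⟩ := hex;
           simp only [Finset.mem_insert, Finset.mem_singleton] at hz;
           rcases hz with rfl | rfl | rfl | rfl <;> omega)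
  · simp only [Finset.mem_insert, Finset.mem_singleton]
    push_neg
    omega
  · intro z hz
    simp only [Finset.mem_insert, Finset.mem_singleton] at hz
    rcases hz with rfl | rfl | rfl | rfl <;> omega
  · intro z hz
    simp only [Finset.mem_insert, Finset.mem_singleton] at hz
    rcases hz with rfl | rfl | rfl | rfl <;> omega

lemma climb5 (n : ℕ) (P : ℕ → ℕ → Prop) (hP : NUIO n P) (b1 b2 b3 b4 b5 x : ℕ)
    (m1 : b1 ∈ Finset.Icc 1 n) (m2 : b2 ∈ Finset.Icc 1 n) (m3 : b3 ∈ Finset.Icc 1 n)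
    (m4 : b4 ∈ Finset.Icc 1 n) (m5 : b5 ∈ Finset.Icc 1 n) (mx : x ∈ Finset.Icc 1 n)
    (o12 : b1 < b2) (o2x : b2 < x) (ox3 : x < b3) (o34 : b3 < b4) (o45 : b4 < b5)
    (p13 : P b1 b3) (p14 : P b1 b4) (p15 : P b1 b5) (p24 : P b2 b4) (p25 : P b2 b5)
    (p35 : P b3 b5)
    (n12 : ¬ P b1 b2) (n23 : ¬ P b2 b3) (n34 : ¬ P b3 b4) (n45 : ¬ P b4 b5)
    (px1 : P b1 x) (px5 : P x b5) : Climbing n P := by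
  refine ⟨x, {b1, b2, b3, b4, b5}, mx, ?_, ?_, ?_, b1, by simp, b5, by simp, ?_, ?_, px1, px5⟩
  · intro z hz
    simp only [Finset.mem_insert, Finset.mem_singleton] at hz
    rcases hz with rfl | rfl | rfl | rfl | rfl <;> assumption
  · intro a ha b hb hab
    simp only [Finset.mem_insert, Finset.mem_singleton] at ha hb
    refine ⟨fun hno => ?_, fun hex => ?_⟩ <;>
      rcases ha with rfl | rfl | rfl | rfl | rfl <;> rcases hb with rfl | rfl | rfl | rfl | rfl <;>
      first
        | exact absurd hab (by omega)
        | exact ⟨by omega, by assumption, rev_not hP (by omega)⟩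
        | assumption
        | (exfalso; exact hno b2 (by simp) ⟨by omega, by omega⟩)
        | (exfalso; exact hno b3 (by simp) ⟨by omega, by omega⟩)
        | (exfalso; exact hno b4 (by simp) ⟨by omega, by omega⟩)
        | (exfalso; obtain ⟨z, hz, hz1, hz2⟩ := hex;
           simp only [Finset.mem_insert, Finset.mem_singleton] at hz;
           rcases hz with rfl | rfl | rfl | rfl | rfl <;> omega)
  · simp only [Finset.mem_insert, Finset.mem_singleton]
    push_neg
    omega
  · intro z hz
    simp only [Finset.mem_insert, Finset.mem_singleton] at hz
    rcases hz with rfl | rfl | rfl | rfl | rfl <;> omega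
  · intro z hz
    simp only [Finset.mem_insert, Finset.mem_singleton] at hz
    rcases hz with rfl | rfl | rfl | rfl | rfl <;> omega

/-- No one is climbing a ladder in P iff P avoids both P_{(3,1,1),5} and P_{(4,2,1,1),6}. -/
theorem stmt8 (n : ℕ) (P : ℕ → ℕ → Prop) (hP : NUIO n P) :
    ¬ Climbing n P ↔ (Avoids n P 5 P311 ∧ Avoids n P 6 P4211) := by
  constructor
  · intro hnc
    constructor
    · rintro ⟨f, hmem, hmono, hiff⟩
      apply hnc
      have hm : ∀ i ∈ Finset.Icc 1 5, ∀ j ∈ Finset.Icc 1 5, i < j → f i < f j := by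
        intro i hi j hj hij; exact hmono i j hi hj hij
      have pos : ∀ i j, i ∈ Finset.Icc 1 5 → j ∈ Finset.Icc 1 5 → P311 i j → P (f i) (f j) :=
        fun i j hi hj h => (hiff i j hi hj).mp h
      have neg : ∀ i j, i ∈ Finset.Icc 1 5 → j ∈ Finset.Icc 1 5 → ¬ P311 i j → ¬ P (f i) (f j) :=
        fun i j hi hj h hp => h ((hiff i j hi hj).mpr hp)
      refine climb4 n P hP (f 1) (f 2) (f 4) (f 5) (f 3)
        (hmem 1 (by decide)) (hmem 2 (by decide)) (hmem 4 (by decide)) (hmem 5 (by decide))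
        (hmem 3 (by decide))
        (hm 1 (by decide) 2 (by decide) (by omega))
        (hm 2 (by decide) 3 (by decide) (by omega))
        (hm 3 (by decide) 4 (by decide) (by omega))
        (hm 4 (by decide) 5 (by decide) (by omega))
        (pos 1 4 (by decide) (by decide) (by simp [P311]))
        (pos 1 5 (by decide) (by decide) (by simp [P311]))
        (pos 2 5 (by decide) (by decide) (by simp [P311]))
        (neg 1 2 (by decide) (by decide) (by simp [P311]))
        (neg 2 4 (by decide) (by decide) (by simp [P311]))
        (neg 4 5 (by decide) (by decide) (by simp [P311]))
        (pos 1 3 (by decide) (by decide) (by simp [P311]))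
        (pos 3 5 (by decide) (by decide) (by simp [P311]))
    · rintro ⟨f, hmem, hmono, hiff⟩
      apply hnc
      have hm : ∀ i ∈ Finset.Icc 1 6, ∀ j ∈ Finset.Icc 1 6, i < j → f i < f j := by
        intro i hi j hj hij; exact hmono i j hi hj hij
      have pos : ∀ i j, i ∈ Finset.Icc 1 6 → j ∈ Finset.Icc 1 6 → P4211 i j → P (f i) (f j) :=
        fun i j hi hj h => (hiff i j hi hj).mp h
      have neg : ∀ i j, i ∈ Finset.Icc 1 6 → j ∈ Finset.Icc 1 6 → ¬ P4211 i j → ¬ P (f i) (f j) :=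
        fun i j hi hj h hp => h ((hiff i j hi hj).mpr hp)
      refine climb5 n P hP (f 1) (f 2) (f 4) (f 5) (f 6) (f 3)
        (hmem 1 (by decide)) (hmem 2 (by decide)) (hmem 4 (by decide)) (hmem 5 (by decide))
        (hmem 6 (by decide)) (hmem 3 (by decide))
        (hm 1 (by decide) 2 (by decide) (by omega))
        (hm 2 (by decide) 3 (by decide) (by omega))
        (hm 3 (by decide) 4 (by decide) (by omega))
        (hm 4 (by decide) 5 (by decide) (by omega))
        (hm 5 (by decide) 6 (by decide) (by omega))
        (pos 1 4 (by decide) (by decide) (by simp [P4211]))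
        (pos 1 5 (by decide) (by decide) (by simp [P4211]))
        (pos 1 6 (by decide) (by decide) (by simp [P4211]))
        (pos 2 5 (by decide) (by decide) (by simp [P4211]))
        (pos 2 6 (by decide) (by decide) (by simp [P4211]))
        (pos 4 6 (by decide) (by decide) (by simp [P4211]))
        (neg 1 2 (by decide) (by decide) (by simp [P4211]))
        (neg 2 4 (by decide) (by decide) (by simp [P4211]))
        (neg 4 5 (by decide) (by decide) (by simp [P4211]))
        (neg 5 6 (by decide) (by decide) (by simp [P4211]))
        (pos 1 3 (by decide) (by decide) (by simp [P4211]))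
        (pos 3 6 (by decide) (by decide) (by simp [P4211]))
  · rintro ⟨hav1, hav2⟩ hclimb
    obtain ⟨x, A, hx, hA, hlad, hxA, y1, hy1, yk, hyk, hmin, hmax, hp1, hpk⟩ := hclimb
    classical
    have mA : ∀ a ∈ A, a ∈ Finset.Icc 1 n := fun a ha => hA ha
    have lad1 : ∀ a ∈ A, ∀ b ∈ A, a < b → (∀ z ∈ A, ¬(a < z ∧ z < b)) → ¬ P a b ∧ ¬ P b a :=
      fun a ha b hb h hc => ((hlad a ha b hb h).1 hc).2
    have lad2 : ∀ a ∈ A, ∀ b ∈ A, ∀ z ∈ A, a < z → z < b → P a b :=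
      fun a ha b hb z hz h1 h2 => (hlad a ha b hb (h1.trans h2)).2 ⟨z, hz, h1, h2⟩
    set S := A.filter (fun a => P a x) with hSdef
    have hSne : S.Nonempty := ⟨y1, Finset.mem_filter.2 ⟨hy1, hp1⟩⟩
    set u := S.max' hSne with hudef
    have huS : u ∈ S := S.max'_mem hSne
    have huA : u ∈ A := (Finset.mem_filter.1 huS).1
    have hux : P u x := (Finset.mem_filter.1 huS).2
    have humax : ∀ a ∈ A, u < a → ¬ P a x := by
      intro a ha hlt hp
      have h1 : a ≤ u := S.le_max' a (Finset.mem_filter.2 ⟨ha, hp⟩)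
      omega
    set T := A.filter (fun a => P x a) with hTdef
    have hTne : T.Nonempty := ⟨yk, Finset.mem_filter.2 ⟨hyk, hpk⟩⟩
    set v := T.min' hTne with hvdef
    have hvT : v ∈ T := T.min'_mem hTne
    have hvA : v ∈ A := (Finset.mem_filter.1 hvT).1
    have hxv : P x v := (Finset.mem_filter.1 hvT).2
    have hvmin : ∀ a ∈ A, a < v → ¬ P x a := by
      intro a ha hlt hp
      have h1 : v ≤ a := T.min'_le a (Finset.mem_filter.2 ⟨ha, hp⟩)
      omega
    have huv : P u v := hP.2.1 _ _ _ hux hxv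
    have houv : u < v := hP.2.2.1 _ _ huv
    have houx : u < x := hP.2.2.1 _ _ hux
    have hoxv : x < v := hP.2.2.1 _ _ hxv
    set B := A.filter (fun z => u < z ∧ z < v) with hBdef
    have hBspec : ∀ b ∈ B, b ∈ A ∧ u < b ∧ b < v := by
      intro b hb
      have h := Finset.mem_filter.1 hb
      exact ⟨h.1, h.2⟩
    have hBmem : ∀ b ∈ A, u < b → b < v → b ∈ B := fun b hb h1 h2 =>
      Finset.mem_filter.2 ⟨hb, h1, h2⟩
    have hBinc : ∀ b ∈ B, b ≠ x ∧ ¬ P b x ∧ ¬ P x b := by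
      intro b hb
      obtain ⟨hbA, h1, h2⟩ := hBspec b hb
      exact ⟨fun h => hxA (h ▸ hbA), humax b hbA h1, hvmin b hbA h2⟩
    have hBne : B.Nonempty := by
      by_contra h
      rw [Finset.not_nonempty_iff_eq_empty] at h
      have hcon : ∀ z ∈ A, ¬(u < z ∧ z < v) := by
        intro z hz hc
        have hzB : z ∈ B := hBmem z hz hc.1 hc.2
        rw [h] at hzB
        exact absurd hzB (Finset.notMem_empty _)
      exact (lad1 u huA v hvA houv hcon).1 huv
    set z1 := B.min' hBne with hz1def
    have hz1B : z1 ∈ B := B.min'_mem hBne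
    obtain ⟨hz1A, hz1u, hz1v⟩ := hBspec z1 hz1B
    have cons_u_z1 : ∀ z ∈ A, ¬ (u < z ∧ z < z1) := by
      intro z hz hc
      have h1 : z1 ≤ z := B.min'_le z (hBmem z hz hc.1 (by omega))
      omega
    have iuz1 := lad1 u huA z1 hz1A hz1u cons_u_z1
    obtain ⟨hz1x, hnz1x, hnxz1⟩ := hBinc z1 hz1B
    have ax1 : u < z1 ∧ z1 < x :=
      hP.2.2.2 z1 u x (mA z1 hz1A) (mA u huA) hx houx hux
        ⟨by omega, iuz1.2, iuz1.1⟩ ⟨hz1x, hnz1x, hnxz1⟩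
    set C := B.erase z1 with hCdef
    rcases C.eq_empty_or_nonempty with hC | hC
    · -- Case 1: |B| = 1, contradiction
      have hBone : ∀ b ∈ B, b = z1 := by
        intro b hb
        by_contra hne
        have hbC : b ∈ C := Finset.mem_erase.2 ⟨hne, hb⟩
        rw [hC] at hbC
        exact absurd hbC (Finset.notMem_empty _)
      have cons_z1_v : ∀ z ∈ A, ¬ (z1 < z ∧ z < v) := by
        intro z hz hc
        have := hBone z (hBmem z hz (by omega) hc.2)
        omega
      have iz1v := lad1 z1 hz1A v hvA hz1v cons_z1_v
      have ax2 : x < z1 ∧ z1 < v :=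
        hP.2.2.2 z1 x v (mA z1 hz1A) hx (mA v hvA) hoxv hxv
          ⟨hz1x, hnz1x, hnxz1⟩ ⟨by omega, iz1v.1, iz1v.2⟩
      omega
    · set z2 := C.min' hC with hz2def
      have hz2C : z2 ∈ C := C.min'_mem hC
      have hz2B : z2 ∈ B := (Finset.mem_erase.1 hz2C).2
      obtain ⟨hz2A, hz2u, hz2v⟩ := hBspec z2 hz2B
      have hz1z2 : z1 < z2 := by
        have h1 : z1 ≤ z2 := B.min'_le z2 hz2B
        have h2 : z2 ≠ z1 := (Finset.mem_erase.1 hz2C).1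
        omega
      have cons_z1_z2 : ∀ z ∈ A, ¬ (z1 < z ∧ z < z2) := by
        intro z hz hc
        have hzB : z ∈ B := hBmem z hz (by omega) (by omega)
        have hzC : z ∈ C := Finset.mem_erase.2 ⟨by omega, hzB⟩
        have h1 : z2 ≤ z := C.min'_le z hzC
        omega
      have iz1z2 := lad1 z1 hz1A z2 hz2A hz1z2 cons_z1_z2
      obtain ⟨hz2x, hnz2x, hnxz2⟩ := hBinc z2 hz2B
      set D := C.erase z2 with hDdef
      rcases D.eq_empty_or_nonempty with hD | hD
      · -- Case 2: |B| = 2, pattern P311 via (u, z1, x, z2, v)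
        have hBtwo : ∀ b ∈ B, b = z1 ∨ b = z2 := by
          intro b hb
          by_contra hne
          push_neg at hne
          have hbD : b ∈ D := Finset.mem_erase.2 ⟨hne.2, Finset.mem_erase.2 ⟨hne.1, hb⟩⟩
          rw [hD] at hbD
          exact absurd hbD (Finset.notMem_empty _)
        have cons_z2_v : ∀ z ∈ A, ¬ (z2 < z ∧ z < v) := by
          intro z hz hc
          have := hBtwo z (hBmem z hz (by omega) hc.2)
          omega
        have iz2v := lad1 z2 hz2A v hvA hz2v cons_z2_v
        have ax2 : x < z2 ∧ z2 < v :=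
          hP.2.2.2 z2 x v (mA z2 hz2A) hx (mA v hvA) hoxv hxv
            ⟨hz2x, hnz2x, hnxz2⟩ ⟨by omega, iz2v.1, iz2v.2⟩
        exact hav1 (witness5 n P hP u z1 x z2 v
          (mA u huA) (mA z1 hz1A) hx (mA z2 hz2A) (mA v hvA)
          ax1.1 ax1.2 ax2.1 ax2.2
          hux (lad2 u huA z2 hz2A z1 hz1A (by omega) (by omega)) huv
          (lad2 z1 hz1A v hvA z2 hz2A (by omega) (by omega)) hxv
          iuz1.1 hnz1x iz1z2.1 hnxz2 iz2v.1)
      · set z3 := D.min' hD with hz3def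
        have hz3D : z3 ∈ D := D.min'_mem hD
        have hz3C : z3 ∈ C := (Finset.mem_erase.1 hz3D).2
        have hz3B : z3 ∈ B := (Finset.mem_erase.1 hz3C).2
        obtain ⟨hz3A, hz3u, hz3v⟩ := hBspec z3 hz3B
        have hz2z3 : z2 < z3 := by
          have h1 : z2 ≤ z3 := C.min'_le z3 hz3C
          have h2 : z3 ≠ z2 := (Finset.mem_erase.1 hz3D).1
          omega
        have cons_z2_z3 : ∀ z ∈ A, ¬ (z2 < z ∧ z < z3) := by
          intro z hz hc
          have hzB : z ∈ B := hBmem z hz (by omega) (by omega)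
          have hzD : z ∈ D := Finset.mem_erase.2 ⟨by omega,
            Finset.mem_erase.2 ⟨by omega, hzB⟩⟩
          have h1 : z3 ≤ z := D.min'_le z hzD
          omega
        have iz2z3 := lad1 z2 hz2A z3 hz3A hz2z3 cons_z2_z3
        obtain ⟨hz3x, hnz3x, hnxz3⟩ := hBinc z3 hz3B
        set E := D.erase z3 with hEdef
        rcases E.eq_empty_or_nonempty with hE | hE
        · -- Case 3: |B| = 3, pattern P4211
          have hBthree : ∀ b ∈ B, b = z1 ∨ b = z2 ∨ b = z3 := by
            intro b hb
            by_contra hne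
            push_neg at hne
            have hbE : b ∈ E := Finset.mem_erase.2 ⟨hne.2.2,
              Finset.mem_erase.2 ⟨hne.2.1, Finset.mem_erase.2 ⟨hne.1, hb⟩⟩⟩
            rw [hE] at hbE
            exact absurd hbE (Finset.notMem_empty _)
          have cons_z3_v : ∀ z ∈ A, ¬ (z3 < z ∧ z < v) := by
            intro z hz hc
            have := hBthree z (hBmem z hz (by omega) hc.2)
            omega
          have iz3v := lad1 z3 hz3A v hvA hz3v cons_z3_v
          have ax3 : x < z3 ∧ z3 < v :=
            hP.2.2.2 z3 x v (mA z3 hz3A) hx (mA v hvA) hoxv hxv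
              ⟨hz3x, hnz3x, hnxz3⟩ ⟨by omega, iz3v.1, iz3v.2⟩
          have hxz2 : x ≠ z2 := Ne.symm hz2x
          rcases hxz2.lt_or_gt with hlt | hlt
          · -- x < z2 : tuple (u, z1, x, z2, z3, v)
            exact hav2 (witness6 n P hP u z1 x z2 z3 v
              (mA u huA) (mA z1 hz1A) hx (mA z2 hz2A) (mA z3 hz3A) (mA v hvA)
              ax1.1 ax1.2 hlt hz2z3 ax3.2
              hux (lad2 u huA z2 hz2A z1 hz1A (by omega) (by omega))
              (lad2 u huA z3 hz3A z1 hz1A (by omega) (by omega)) huv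
              (lad2 z1 hz1A z3 hz3A z2 hz2A (by omega) (by omega))
              (lad2 z1 hz1A v hvA z2 hz2A (by omega) (by omega)) hxv
              (lad2 z2 hz2A v hvA z3 hz3A (by omega) (by omega))
              iuz1.1 hnz1x iz1z2.1 hnxz2 hnxz3 iz2z3.1 iz3v.1)
          · -- z2 < x : tuple (u, z1, z2, x, z3, v)
            exact hav2 (witness6 n P hP u z1 z2 x z3 v
              (mA u huA) (mA z1 hz1A) (mA z2 hz2A) hx (mA z3 hz3A) (mA v hvA)
              ax1.1 hz1z2 hlt ax3.1 ax3.2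
              (lad2 u huA z2 hz2A z1 hz1A (by omega) (by omega)) hux
              (lad2 u huA z3 hz3A z1 hz1A (by omega) (by omega)) huv
              (lad2 z1 hz1A z3 hz3A z2 hz2A (by omega) (by omega))
              (lad2 z1 hz1A v hvA z2 hz2A (by omega) (by omega))
              (lad2 z2 hz2A v hvA z3 hz3A (by omega) (by omega)) hxv
              iuz1.1 iz1z2.1 hnz1x hnz2x iz2z3.1 hnxz3 iz3v.1)
        · -- Case 4: |B| ≥ 4, pattern P311 via (u, z1, z2, x, z4)
          set z4 := E.min' hE with hz4def
          have hz4E : z4 ∈ E := E.min'_mem hE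
          have hz4D : z4 ∈ D := (Finset.mem_erase.1 hz4E).2
          have hz4B : z4 ∈ B := (Finset.mem_erase.1 (Finset.mem_erase.1 hz4D).2).2
          obtain ⟨hz4A, hz4u, hz4v⟩ := hBspec z4 hz4B
          have hz3z4 : z3 < z4 := by
            have h1 : z3 ≤ z4 := D.min'_le z4 hz4D
            have h2 : z4 ≠ z3 := (Finset.mem_erase.1 hz4E).1
            omega
          obtain ⟨hz4x, hnz4x, hnxz4⟩ := hBinc z4 hz4B
          have p24' : P z2 z4 := lad2 z2 hz2A z4 hz4A z3 hz3A (by omega) (by omega)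
          have ax4 : z2 < x ∧ x < z4 :=
            hP.2.2.2 x z2 z4 hx (mA z2 hz2A) (mA z4 hz4A) (by omega) p24'
              ⟨Ne.symm hz2x, hnxz2, hnz2x⟩ ⟨Ne.symm hz4x, hnxz4, hnz4x⟩
          exact hav1 (witness5 n P hP u z1 z2 x z4
            (mA u huA) (mA z1 hz1A) (mA z2 hz2A) hx (mA z4 hz4A)
            ax1.1 hz1z2 ax4.1 ax4.2
            (lad2 u huA z2 hz2A z1 hz1A (by omega) (by omega)) hux
            (lad2 u huA z4 hz4A z1 hz1A (by omega) (by omega))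
            (lad2 z1 hz1A z4 hz4A z2 hz2A (by omega) (by omega)) p24'
            iuz1.1 iz1z2.1 hnz1x hnz2x hnxz4)
end

section
/- Let P be a natural unit interval order. P avoids P_{(3,1,1),5} if and only if the join of two ladders is a ladder: whenever L and L' are ladders in P with L ∩ L' = {x}, x is the maximum of L and minimum of L' in the usual order, and |L|, |L'| ≥ 3, then L ∪ L' is a ladder in P. -/
lemma ladder3 (P : ℕ → ℕ → Prop) (a b c : ℕ) (hab : a < b) (hbc : b < c)
    (h1 : Incomp P a b) (h2 : Incomp P b c) (h3 : P a c) :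
    IsLadderSet P {a, b, c} := by
  intro x hx y hy hxy
  simp only [Finset.mem_insert, Finset.mem_singleton] at hx hy
  rcases hx with rfl | rfl | rfl <;> rcases hy with rfl | rfl | rfl <;>
    first
    | exact absurd hxy (by omega)
    | -- (a,b) case
      exact ⟨fun _ => h1, by
        rintro ⟨z, hz, hz1, hz2⟩
        simp only [Finset.mem_insert, Finset.mem_singleton] at hz
        rcases hz with rfl | rfl | rfl <;> (exfalso; omega)⟩
    | exact ⟨fun h => ((h b (by simp)) ⟨hab, hbc⟩).elim, fun _ => h3⟩
    | exact ⟨fun _ => h2, by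
        rintro ⟨z, hz, hz1, hz2⟩
        simp only [Finset.mem_insert, Finset.mem_singleton] at hz
        rcases hz with rfl | rfl | rfl <;> (exfalso; omega)⟩

/-- P avoids P_{(3,1,1),5} iff a join of two ladders is again a ladder. -/
theorem stmt9 (n : ℕ) (P : ℕ → ℕ → Prop) (hP : NUIO n P) :
    Avoids n P 5 P311 ↔
      ∀ (L L' : Finset ℕ) (x : ℕ),
        L ⊆ Finset.Icc 1 n → L' ⊆ Finset.Icc 1 n →
        IsLadderSet P L → IsLadderSet P L' →
        L ∩ L' = {x} → (∀ z ∈ L, z ≤ x) → (∀ z ∈ L', x ≤ z) →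
        3 ≤ L.card → 3 ≤ L'.card →
        IsLadderSet P (L ∪ L') := by
  obtain ⟨hirr, htrans, hord, hax⟩ := hP
  have hno : ∀ a b : ℕ, b ≤ a → ¬ P a b := fun a b h hp => absurd (hord a b hp) (by omega)
  constructor
  · -- forward direction
    intro hav L L' x hLn hL'n hL hL' hint hLmax hL'min hcardL hcardL'
    have hxI : x ∈ L ∩ L' := by rw [hint]; exact Finset.mem_singleton_self x
    have hxL : x ∈ L := (Finset.mem_inter.1 hxI).1
    have hxL' : x ∈ L' := (Finset.mem_inter.1 hxI).2
    have hdi : ∀ (A : Finset ℕ), IsLadderSet P A → ∀ p ∈ A, ∀ q ∈ A, p < q →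
        P p q ∨ Incomp P p q := by
      intro A hA p hp q hq hpq
      by_cases h : ∃ z ∈ A, p < z ∧ z < q
      · exact Or.inl ((hA p hp q hq hpq).2 h)
      · exact Or.inr ((hA p hp q hq hpq).1 (fun z hz hc => h ⟨z, hz, hc⟩))
    have tool1 : ∀ u v : ℕ, u ∈ Finset.Icc 1 n → v ∈ Finset.Icc 1 n → u < x → x < v →
        P u x → Incomp P x v → P u v := by
      intro u v hun hvn hux hxv hPux hI
      by_contra hn
      have := hax v u x hvn hun (hLn hxL) hux hPux
        ⟨by omega, hno v u (by omega), hn⟩ ⟨hI.1.symm, hI.2.2, hI.2.1⟩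
      omega
    have tool2 : ∀ u v : ℕ, u ∈ Finset.Icc 1 n → v ∈ Finset.Icc 1 n → u < x → x < v →
        Incomp P u x → P x v → P u v := by
      intro u v hun hvn hux hxv hI hPxv
      by_contra hn
      have := hax u x v hun (hLn hxL) hvn hxv hPxv hI
        ⟨by omega, hn, hno v u (by omega)⟩
      omega
    have key : ∀ u ∈ L, u < x → ∀ v ∈ L', x < v → P u v := by
      intro u hu hux v hv hxv
      rcases hdi L hL u hu x hxL hux with hPux | hIux
      · rcases hdi L' hL' x hxL' v hv hxv with hPxv | hIxv
        · exact htrans _ _ _ hPux hPxv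
        · exact tool1 u v (hLn hu) (hL'n hv) hux hxv hPux hIxv
      · rcases hdi L' hL' x hxL' v hv hxv with hPxv | hIxv
        · exact tool2 u v (hLn hu) (hL'n hv) hux hxv hIux hPxv
        · -- hard case: build a P311 pattern
          by_contra hnuv
          have hIuv : Incomp P u v := ⟨by omega, hnuv, hno v u (by omega)⟩
          have hnb : ∀ z ∈ L, ¬ (u < z ∧ z < x) := by
            intro z hz hc
            exact hIux.2.1 ((hL u hu x hxL hux).2 ⟨z, hz, hc⟩)
          have hnb' : ∀ z ∈ L', ¬ (x < z ∧ z < v) := by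
            intro z hz hc
            exact hIxv.2.1 ((hL' x hxL' v hv hxv).2 ⟨z, hz, hc⟩)
          have hS : (L.filter (· < u)).Nonempty := by
            by_contra hSe
            have hsub : L ⊆ {u, x} := by
              intro z hz
              simp only [Finset.mem_insert, Finset.mem_singleton]
              by_contra hc
              push_neg at hc
              have hzx : z < x := lt_of_le_of_ne (hLmax z hz) hc.2
              have hzu : ¬ z < u := fun h => hSe ⟨z, Finset.mem_filter.2 ⟨hz, h⟩⟩
              exact hnb z hz ⟨by omega, hzx⟩
            have h1 := Finset.card_le_card hsub
            have h2 : ({u, x} : Finset ℕ).card ≤ 2 :=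
              (Finset.card_insert_le _ _).trans (by simp)
            omega
          set w := (L.filter (· < u)).max' hS with hw
          have hwS : w ∈ L.filter (· < u) := (L.filter (· < u)).max'_mem hS
          have hwL : w ∈ L := (Finset.mem_filter.1 hwS).1
          have hwu : w < u := by have := (Finset.mem_filter.1 hwS).2; simpa using this
          have hwmax : ∀ z ∈ L, ¬ (w < z ∧ z < u) := by
            intro z hz hc
            have : z ≤ w := Finset.le_max' _ z (Finset.mem_filter.2 ⟨hz, by simpa using hc.2⟩)
            omega
          have hIwu : Incomp P w u := (hL w hwL u hu hwu).1 hwmax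
          have hPwx : P w x := (hL w hwL x hxL (by omega)).2 ⟨u, hu, hwu, hux⟩
          have hT : (L'.filter (fun z => v < z)).Nonempty := by
            by_contra hTe
            have hsub : L' ⊆ {x, v} := by
              intro z hz
              simp only [Finset.mem_insert, Finset.mem_singleton]
              by_contra hc
              push_neg at hc
              have hxz : x < z := lt_of_le_of_ne (hL'min z hz) (Ne.symm hc.1)
              have hzv : ¬ v < z := fun h => hTe ⟨z, Finset.mem_filter.2 ⟨hz, h⟩⟩
              exact hnb' z hz ⟨hxz, by omega⟩
            have h1 := Finset.card_le_card hsub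
            have h2 : ({x, v} : Finset ℕ).card ≤ 2 :=
              (Finset.card_insert_le _ _).trans (by simp)
            omega
          set y := (L'.filter (fun z => v < z)).min' hT with hy
          have hyS : y ∈ L'.filter (fun z => v < z) := (L'.filter (fun z => v < z)).min'_mem hT
          have hyL' : y ∈ L' := (Finset.mem_filter.1 hyS).1
          have hvy : v < y := by have := (Finset.mem_filter.1 hyS).2; simpa using this
          have hymin : ∀ z ∈ L', ¬ (v < z ∧ z < y) := by
            intro z hz hc
            have : y ≤ z := Finset.min'_le _ z (Finset.mem_filter.2 ⟨hz, hc.1⟩)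
            omega
          have hIvy : Incomp P v y := (hL' v hv y hyL' hvy).1 hymin
          have hPxy : P x y := (hL' x hxL' y hyL' (by omega)).2 ⟨v, hv, hxv, hvy⟩
          have hPwv : P w v := tool1 w v (hLn hwL) (hL'n hv) (by omega) hxv hPwx hIxv
          have hPwy : P w y := htrans _ _ _ hPwx hPxy
          have hPuy : P u y := tool2 u y (hLn hu) (hL'n hyL') hux (by omega) hIux hPxy
          apply hav
          refine ⟨fun i => if i = 1 then w else if i = 2 then u else if i = 3 then x
            else if i = 4 then v else y, ?_, ?_, ?_⟩
          · intro i hi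
            simp only [Finset.mem_Icc] at hi
            obtain ⟨hi1, hi2⟩ := hi
            interval_cases i <;> norm_num <;>
              first
              | exact Finset.mem_Icc.1 (hLn hwL)
              | exact Finset.mem_Icc.1 (hLn hu)
              | exact Finset.mem_Icc.1 (hLn hxL)
              | exact Finset.mem_Icc.1 (hL'n hv)
              | exact Finset.mem_Icc.1 (hL'n hyL')
          · intro i j hi hj hij
            simp only [Finset.mem_Icc] at hi hj
            obtain ⟨hi1, hi2⟩ := hi
            obtain ⟨hj1, hj2⟩ := hj
            interval_cases i <;> interval_cases j <;> norm_num <;> omega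
          · intro i j hi hj
            simp only [Finset.mem_Icc] at hi hj
            obtain ⟨hi1, hi2⟩ := hi
            obtain ⟨hj1, hj2⟩ := hj
            interval_cases i <;> interval_cases j <;> norm_num [P311] <;>
              first
              | exact hPwx
              | exact hPwv
              | exact hPwy
              | exact hPuy
              | exact hPxy
              | exact hIwu.2.1
              | exact hIux.2.1
              | exact hIxv.2.1
              | exact hIvy.2.1
              | exact hIuv.2.1
              | exact hno _ _ (by omega)
              | exact hirr _
    -- now prove the union is a ladder
    have caseL : ∀ p ∈ L, ∀ q ∈ L, p < q →
        ((∀ z ∈ L ∪ L', ¬(p < z ∧ z < q)) → Incomp P p q) ∧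
        ((∃ z ∈ L ∪ L', p < z ∧ z < q) → P p q) := by
      intro p hp q hq hpq
      constructor
      · intro h
        exact (hL p hp q hq hpq).1 (fun z hz => h z (Finset.mem_union_left _ hz))
      · rintro ⟨z, hz, hz1, hz2⟩
        rcases Finset.mem_union.1 hz with hzL | hzL'
        · exact (hL p hp q hq hpq).2 ⟨z, hzL, hz1, hz2⟩
        · have h1 := hL'min z hzL'
          have h2 := hLmax q hq
          exact absurd hz2 (by omega)
    have caseL' : ∀ p ∈ L', ∀ q ∈ L', p < q →
        ((∀ z ∈ L ∪ L', ¬(p < z ∧ z < q)) → Incomp P p q) ∧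
        ((∃ z ∈ L ∪ L', p < z ∧ z < q) → P p q) := by
      intro p hp q hq hpq
      constructor
      · intro h
        exact (hL' p hp q hq hpq).1 (fun z hz => h z (Finset.mem_union_right _ hz))
      · rintro ⟨z, hz, hz1, hz2⟩
        rcases Finset.mem_union.1 hz with hzL | hzL'
        · have h1 := hLmax z hzL
          have h2 := hL'min p hp
          exact absurd hz1 (by omega)
        · exact (hL' p hp q hq hpq).2 ⟨z, hzL', hz1, hz2⟩
    intro p hp q hq hpq
    rcases Finset.mem_union.1 hp with hpL | hpL'
    · rcases Finset.mem_union.1 hq with hqL | hqL'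
      · exact caseL p hpL q hqL hpq
      · by_cases hqx : q = x
        · exact caseL p hpL q (by rw [hqx]; exact hxL) hpq
        · by_cases hpx : p = x
          · exact caseL' p (by rw [hpx]; exact hxL') q hqL' hpq
          · have hpxlt : p < x := lt_of_le_of_ne (hLmax p hpL) hpx
            have hxqlt : x < q := lt_of_le_of_ne (hL'min q hqL') (Ne.symm hqx)
            constructor
            · intro h
              exact ((h x (Finset.mem_union_left _ hxL)) ⟨hpxlt, hxqlt⟩).elim
            · intro _
              exact key p hpL hpxlt q hqL' hxqlt
    · rcases Finset.mem_union.1 hq with hqL | hqL'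
      · have h1 := hL'min p hpL'
        have h2 := hLmax q hqL
        exact absurd hpq (by omega)
      · exact caseL' p hpL' q hqL' hpq
  · -- reverse direction
    intro hjoin hemb
    obtain ⟨f, hf1, hf2, hf3⟩ := hemb
    have hm : ∀ i : ℕ, 1 ≤ i → i ≤ 5 → f i ∈ Finset.Icc 1 n :=
      fun i h1 h2 => hf1 i (Finset.mem_Icc.2 ⟨h1, h2⟩)
    have hlt : ∀ i j : ℕ, 1 ≤ i → i < j → j ≤ 5 → f i < f j :=
      fun i j h1 h2 h3 => hf2 i j (Finset.mem_Icc.2 ⟨h1, by omega⟩)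
        (Finset.mem_Icc.2 ⟨by omega, h3⟩) h2
    have hiff : ∀ i j : ℕ, 1 ≤ i → i ≤ 5 → 1 ≤ j → j ≤ 5 → (P311 i j ↔ P (f i) (f j)) :=
      fun i j a b c d => hf3 i j (Finset.mem_Icc.2 ⟨a, b⟩) (Finset.mem_Icc.2 ⟨c, d⟩)
    have l12 : f 1 < f 2 := hlt 1 2 (by norm_num) (by norm_num) (by norm_num)
    have l23 : f 2 < f 3 := hlt 2 3 (by norm_num) (by norm_num) (by norm_num)
    have l34 : f 3 < f 4 := hlt 3 4 (by norm_num) (by norm_num) (by norm_num)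
    have l45 : f 4 < f 5 := hlt 4 5 (by norm_num) (by norm_num) (by norm_num)
    have h13 : P (f 1) (f 3) :=
      (hiff 1 3 (by norm_num) (by norm_num) (by norm_num) (by norm_num)).1 (by norm_num [P311])
    have h35 : P (f 3) (f 5) :=
      (hiff 3 5 (by norm_num) (by norm_num) (by norm_num) (by norm_num)).1 (by norm_num [P311])
    have h24 : ¬ P (f 2) (f 4) := fun h => by
      have := (hiff 2 4 (by norm_num) (by norm_num) (by norm_num) (by norm_num)).2 h
      norm_num [P311] at this
    have h12 : ¬ P (f 1) (f 2) := fun h => by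
      have := (hiff 1 2 (by norm_num) (by norm_num) (by norm_num) (by norm_num)).2 h
      norm_num [P311] at this
    have h23 : ¬ P (f 2) (f 3) := fun h => by
      have := (hiff 2 3 (by norm_num) (by norm_num) (by norm_num) (by norm_num)).2 h
      norm_num [P311] at this
    have h34 : ¬ P (f 3) (f 4) := fun h => by
      have := (hiff 3 4 (by norm_num) (by norm_num) (by norm_num) (by norm_num)).2 h
      norm_num [P311] at this
    have h45 : ¬ P (f 4) (f 5) := fun h => by
      have := (hiff 4 5 (by norm_num) (by norm_num) (by norm_num) (by norm_num)).2 h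
      norm_num [P311] at this
    have I12 : Incomp P (f 1) (f 2) := ⟨by omega, h12, hno _ _ (by omega)⟩
    have I23 : Incomp P (f 2) (f 3) := ⟨by omega, h23, hno _ _ (by omega)⟩
    have I34 : Incomp P (f 3) (f 4) := ⟨by omega, h34, hno _ _ (by omega)⟩
    have I45 : Incomp P (f 4) (f 5) := ⟨by omega, h45, hno _ _ (by omega)⟩
    have hLl : IsLadderSet P {f 1, f 2, f 3} := ladder3 P _ _ _ l12 l23 I12 I23 h13
    have hL'l : IsLadderSet P {f 3, f 4, f 5} := ladder3 P _ _ _ l34 l45 I34 I45 h35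
    have hsub1 : ({f 1, f 2, f 3} : Finset ℕ) ⊆ Finset.Icc 1 n := by
      intro z hz
      simp only [Finset.mem_insert, Finset.mem_singleton] at hz
      rcases hz with rfl | rfl | rfl
      · exact hm 1 (by norm_num) (by norm_num)
      · exact hm 2 (by norm_num) (by norm_num)
      · exact hm 3 (by norm_num) (by norm_num)
    have hsub2 : ({f 3, f 4, f 5} : Finset ℕ) ⊆ Finset.Icc 1 n := by
      intro z hz
      simp only [Finset.mem_insert, Finset.mem_singleton] at hz
      rcases hz with rfl | rfl | rfl
      · exact hm 3 (by norm_num) (by norm_num)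
      · exact hm 4 (by norm_num) (by norm_num)
      · exact hm 5 (by norm_num) (by norm_num)
    have hint : ({f 1, f 2, f 3} : Finset ℕ) ∩ {f 3, f 4, f 5} = {f 3} := by
      ext z
      simp only [Finset.mem_inter, Finset.mem_insert, Finset.mem_singleton]
      omega
    have hc1 : ({f 1, f 2, f 3} : Finset ℕ).card = 3 := by
      rw [Finset.card_eq_three]
      exact ⟨f 1, f 2, f 3, by omega, by omega, by omega, rfl⟩
    have hc2 : ({f 3, f 4, f 5} : Finset ℕ).card = 3 := by
      rw [Finset.card_eq_three]
      exact ⟨f 3, f 4, f 5, by omega, by omega, by omega, rfl⟩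
    have hlad := hjoin {f 1, f 2, f 3} {f 3, f 4, f 5} (f 3) hsub1 hsub2 hLl hL'l hint
      (by intro z hz; simp only [Finset.mem_insert, Finset.mem_singleton] at hz
          rcases hz with rfl | rfl | rfl <;> omega)
      (by intro z hz; simp only [Finset.mem_insert, Finset.mem_singleton] at hz
          rcases hz with rfl | rfl | rfl <;> omega)
      (by omega) (by omega)
    have hP24 : P (f 2) (f 4) := by
      refine (hlad (f 2) (by simp) (f 4) (by simp) (by omega)).2 ⟨f 3, by simp, by omega, by omega⟩
    exact h24 hP24
end

section
/- Let P be a natural unit interval order on [1,n], and suppose w, w' ∈ S_n are connected by a P-Knuth move occurring at position i (so w and w' differ only in positions i−1, i, i+1). Then exactly one of w, w' has a P-descent at position i−1 and not at i, and the other has a P-descent at i and not at i−1; moreover for j ∉ [i−2, i+1], j is a P-descent of w iff j is a P-descent of w'. -/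
/-- A single P-Knuth move on a triple of consecutive letters: for `a < b < c` with
`a ≺_P c`, the allowed (symmetric) rewritings of the triple, depending on the
restriction of `P` to `{a,b,c}`. -/
def KnuthTriple (P : ℕ → ℕ → Prop) (x y : ℕ × ℕ × ℕ) : Prop :=
  ∃ a b c : ℕ, a < b ∧ b < c ∧ P a c ∧
    ((Incomp P a b ∧ Incomp P b c ∧
        ((x, y) = ((b, c, a), (c, a, b)) ∨ (x, y) = ((c, a, b), (b, c, a)))) ∨
     (P a b ∧ Incomp P b c ∧
        ((x, y) = ((b, c, a), (b, a, c)) ∨ (x, y) = ((b, a, c), (b, c, a)) ∨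
         (x, y) = ((c, b, a), (c, a, b)) ∨ (x, y) = ((c, a, b), (c, b, a)))) ∨
     (Incomp P a b ∧ P b c ∧
        ((x, y) = ((b, c, a), (c, b, a)) ∨ (x, y) = ((c, b, a), (b, c, a)) ∨
         (x, y) = ((a, c, b), (c, a, b)) ∨ (x, y) = ((c, a, b), (a, c, b)))) ∨
     (P a b ∧ P b c ∧
        ((x, y) = ((b, c, a), (b, a, c)) ∨ (x, y) = ((b, a, c), (b, c, a)) ∨
         (x, y) = ((a, c, b), (c, a, b)) ∨ (x, y) = ((c, a, b), (a, c, b)))))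


/-- `w` and `w'` (words recorded as functions from positions to values) are connected by
a P-Knuth move at position `i`: they agree outside positions `i-1, i, i+1`, where the
entries are rewritten by a P-Knuth triple move. -/
def KnuthMoveAt (P : ℕ → ℕ → Prop) (w w2 : ℕ → ℕ) (i : ℕ) : Prop :=
  (∀ j, j ≠ i - 1 → j ≠ i → j ≠ i + 1 → w2 j = w j) ∧
  KnuthTriple P (w (i - 1), w i, w (i + 1)) (w2 (i - 1), w2 i, w2 (i + 1))

/-- `j` is a P-descent of the word `w`: `w (j+1) ≺_P w j`. -/
def PDes (P : ℕ → ℕ → Prop) (w : ℕ → ℕ) (j : ℕ) : Prop := P (w (j + 1)) (w j)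

/-- If w, w' ∈ S_n are connected by a P-Knuth move at position i, then exactly one of
them has a P-descent at i-1 and not at i, the other at i and not at i-1; and away from
[i-2, i+1] the P-descents agree. -/
theorem stmt10 (n : ℕ) (P : ℕ → ℕ → Prop) (hP : NUIO n P)
    (w w' : ℕ → ℕ)
    (hw : Set.BijOn w (Set.Icc 1 n) (Set.Icc 1 n))
    (hw' : Set.BijOn w' (Set.Icc 1 n) (Set.Icc 1 n))
    (i : ℕ) (hi1 : 2 ≤ i) (hi2 : i + 1 ≤ n)
    (hmove : KnuthMoveAt P w w' i) :
    ((PDes P w (i - 1) ∧ ¬ PDes P w i ∧ PDes P w' i ∧ ¬ PDes P w' (i - 1)) ∨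
     (PDes P w i ∧ ¬ PDes P w (i - 1) ∧ PDes P w' (i - 1) ∧ ¬ PDes P w' i)) ∧
    (∀ j, 1 ≤ j → j ≤ n - 1 → (j < i - 2 ∨ i + 1 < j) →
      (PDes P w j ↔ PDes P w' j)) := by
  obtain ⟨hagree, a, b, c, hab, hbc, hac, hcase⟩ := hmove
  have hlt := hP.2.2.1
  have hba : ¬ P b a := fun h => by have := hlt _ _ h; omega
  have hcb : ¬ P c b := fun h => by have := hlt _ _ h; omega
  have hca : ¬ P c a := fun h => by have := hlt _ _ h; omega
  have hii : i - 1 + 1 = i := by omega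
  constructor
  · rcases hcase with ⟨⟨_,h1,h1'⟩, ⟨_,h2,h2'⟩, heq | heq⟩ |
      ⟨h1, ⟨_,h2,h2'⟩, heq|heq|heq|heq⟩ |
      ⟨⟨_,h1,h1'⟩, h2, heq|heq|heq|heq⟩ |
      ⟨h1, h2, heq|heq|heq|heq⟩ <;>
    · simp only [Prod.mk.injEq] at heq
      obtain ⟨⟨e1, e2, e3⟩, e4, e5, e6⟩ := heq
      simp only [PDes, hii, e1, e2, e3, e4, e5, e6]
      tauto
  · intro j hj1 hj2 hj3
    have e1 : w' j = w j := hagree j (by omega) (by omega) (by omega)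
    have e2 : w' (j+1) = w (j+1) := hagree (j+1) (by omega) (by omega) (by omega)
    simp [PDes, e1, e2]
end

section
/- Let P be a natural unit interval order on [1,n]. If w, w' ∈ S_n are connected by a single P-Knuth move, then |finv_P(w)| = |finv_P(w')|, where finv_P(w) = {(i,j) : j < i, w^{-1}(i) < w^{-1}(j), and i,j are P-incomparable}. Hence the fake P-inversion number is constant on P-Knuth equivalence classes. -/
/-- Two words (lists) are connected by a single P-Knuth move: three consecutive letters
are rewritten by a P-Knuth triple move, all other letters fixed. -/
def KnuthMoveL (P : ℕ → ℕ → Prop) (w w2 : List ℕ) : Prop :=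
  ∃ (l1 l2 : List ℕ) (x1 x2 x3 y1 y2 y3 : ℕ),
    w = l1 ++ [x1, x2, x3] ++ l2 ∧ w2 = l1 ++ [y1, y2, y3] ++ l2 ∧
    KnuthTriple P (x1, x2, x3) (y1, y2, y3)

/-- i appears (strictly) before j in the word w. -/
def Before (w : List ℕ) (i j : ℕ) : Prop :=
  ∃ l1 l2 l3 : List ℕ, w = l1 ++ i :: (l2 ++ j :: l3)

/-- The set of fake P-inversions of a word w: pairs (i,j) with j < i, i before j in w,
and i, j P-incomparable. -/
def finvSet (P : ℕ → ℕ → Prop) (w : List ℕ) : Set (ℕ × ℕ) :=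
  {p : ℕ × ℕ | p.2 < p.1 ∧ Incomp P p.1 p.2 ∧ Before w p.1 p.2}

/-!
In a duplicate-free word `l₁ ++ m ++ l₂`, whether `i` comes before `j` depends on the order of
the block `m` only when both `i` and `j` lie in `m`. Hence permuting the block changes only the
fake inversions inside it, and a P-Knuth move reduces to a check on three letters `a < b < c`
with `a ≺ c`: move (1) trades the fake inversion `(b, a)` for `(c, b)`, and each of the other
moves leaves the fake inversions of the triple unchanged.
-/

open List

namespace List

theorem pair_sublist_append_iff {α : Type*} {a b : α} {l₁ l₂ : List α} :
    [a, b] <+ l₁ ++ l₂ ↔ [a, b] <+ l₁ ∨ a ∈ l₁ ∧ b ∈ l₂ ∨ [a, b] <+ l₂ := by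
  simp only [sublist_append_iff, cons_eq_append_iff, nil_eq_append_iff]
  constructor
  · rintro ⟨u, v, ⟨rfl, rfl⟩ | ⟨u, rfl, ⟨rfl, rfl⟩ | ⟨_, rfl, rfl, rfl⟩⟩, hu, hv⟩ <;> simp_all
  · rintro (h | ⟨ha, hb⟩ | h)
    · exact ⟨[a, b], [], by simp, h, nil_sublist _⟩
    · exact ⟨[a], [b], by simp, singleton_sublist.mpr ha, singleton_sublist.mpr hb⟩
    · exact ⟨[], [a, b], by simp, nil_sublist _, h⟩

theorem pair_sublist_append_perm_iff {α : Type*} {a b : α} {l₁ m m' l₂ : List α} (hm : m ~ m')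
    (hab : ¬(a ∈ m ∧ b ∈ m)) : [a, b] <+ l₁ ++ m ++ l₂ ↔ [a, b] <+ l₁ ++ m' ++ l₂ := by
  have not_sublist : ∀ {k}, k ~ m → ¬[a, b] <+ k := fun hk h =>
    hab ⟨hk.subset (h.subset (by simp)), hk.subset (h.subset (by simp))⟩
  simp only [append_assoc, pair_sublist_append_iff, mem_append, hm.mem_iff,
    not_sublist (Perm.refl m), not_sublist hm.symm]

theorem pair_sublist_infix_iff {α : Type*} {a b : α} {l₁ m l₂ : List α}
    (hnd : (l₁ ++ m ++ l₂).Nodup) (ha : a ∈ m) (hb : b ∈ m) :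
    [a, b] <+ l₁ ++ m ++ l₂ ↔ [a, b] <+ m := by
  refine ⟨fun h => ?_, fun h => h.trans (infix_append l₁ m l₂).sublist⟩
  rw [nodup_append, nodup_append] at hnd
  obtain ⟨⟨-, -, h₁m⟩, -, hm₂⟩ := hnd
  have hab : ∀ x ∈ [a, b], x ∈ m := by simp [ha, hb]
  exact (h.of_sublist_append_left fun x hx hx₂ => hm₂ x (mem_append_right _ (hab x hx)) x hx₂ rfl)
    |>.of_sublist_append_right fun x hx hx₁ => h₁m x hx₁ x (hab x hx) rfl

theorem pair_sublist_triple_iff {α : Type*} {a b u v z : α} :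
    [a, b] <+ [u, v, z] ↔ a = u ∧ b = v ∨ a = u ∧ b = z ∨ a = v ∧ b = z := by
  grind

end List

theorem before_iff_sublist {w : List ℕ} {i j : ℕ} : Before w i j ↔ [i, j] <+ w := by
  constructor
  · rintro ⟨l₁, l₂, l₃, rfl⟩
    simp
  · intro h
    obtain ⟨r₁, r₂, rfl, hi, hj⟩ := cons_sublist_iff.mp h
    obtain ⟨l₁, l₂, rfl⟩ := append_of_mem hi
    obtain ⟨l₃, l₄, rfl⟩ := append_of_mem (singleton_sublist.mp hj)
    exact ⟨l₁, l₂ ++ l₃, l₄, by simp⟩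

theorem incomp_comm {P : ℕ → ℕ → Prop} {a b : ℕ} : Incomp P a b ↔ Incomp P b a := by
  unfold Incomp
  tauto

theorem not_incomp_of_rel {P : ℕ → ℕ → Prop} {a b : ℕ} (h : P a b) : ¬Incomp P a b :=
  fun hab => hab.2.1 h

section FakeInversions

variable (P : ℕ → ℕ → Prop)

theorem finite_finvSet (w : List ℕ) : (finvSet P w).Finite :=
  (w.finite_toSet.prod w.finite_toSet).subset fun _ ⟨_, _, h⟩ =>
    ⟨(before_iff_sublist.mp h).subset (by simp), (before_iff_sublist.mp h).subset (by simp)⟩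

theorem finvSet_triple (u v z : ℕ) :
    finvSet P [u, v, z] = {(u, v), (u, z), (v, z)} ∩ {p | p.2 < p.1 ∧ Incomp P p.1 p.2} := by
  ext ⟨i, j⟩
  simp only [finvSet, before_iff_sublist, pair_sublist_triple_iff, Set.mem_ofPred_eq,
    Set.mem_inter_iff, Set.mem_insert_iff, Set.mem_singleton_iff, Prod.mk.injEq]
  tauto

theorem finvSet_append_inter_of_nodup {l₁ m l₂ : List ℕ} (hnd : (l₁ ++ m ++ l₂).Nodup) :
    finvSet P (l₁ ++ m ++ l₂) ∩ {p | p.1 ∈ m ∧ p.2 ∈ m} = finvSet P m := by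
  ext ⟨i, j⟩
  simp only [finvSet, before_iff_sublist, Set.mem_inter_iff, Set.mem_ofPred_eq]
  constructor
  · rintro ⟨⟨hlt, hinc, h⟩, hi, hj⟩
    exact ⟨hlt, hinc, (pair_sublist_infix_iff hnd hi hj).mp h⟩
  · rintro ⟨hlt, hinc, h⟩
    have hi : i ∈ m := h.subset (by simp)
    have hj : j ∈ m := h.subset (by simp)
    exact ⟨⟨hlt, hinc, (pair_sublist_infix_iff hnd hi hj).mpr h⟩, hi, hj⟩

theorem finvSet_append_sdiff_of_perm {l₁ m m' l₂ : List ℕ} (hm : m ~ m') :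
    finvSet P (l₁ ++ m ++ l₂) \ {p | p.1 ∈ m ∧ p.2 ∈ m} =
      finvSet P (l₁ ++ m' ++ l₂) \ {p | p.1 ∈ m' ∧ p.2 ∈ m'} := by
  ext ⟨i, j⟩
  simp only [finvSet, before_iff_sublist, Set.mem_sdiff, Set.mem_ofPred_eq, hm.mem_iff]
  refine and_congr_left fun hij => and_congr_right' (and_congr_right' ?_)
  exact pair_sublist_append_perm_iff hm (by rwa [hm.mem_iff, hm.mem_iff])

theorem ncard_finvSet_append_eq {l₁ m m' l₂ : List ℕ} (hm : m ~ m')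
    (hnd : (l₁ ++ m ++ l₂).Nodup) (h : (finvSet P m).ncard = (finvSet P m').ncard) :
    (finvSet P (l₁ ++ m ++ l₂)).ncard = (finvSet P (l₁ ++ m' ++ l₂)).ncard := by
  have hnd' : (l₁ ++ m' ++ l₂).Nodup := ((hm.append_left l₁).append_right l₂).nodup_iff.mp hnd
  rw [← Set.ncard_inter_add_ncard_sdiff_eq_ncard _ {p | p.1 ∈ m ∧ p.2 ∈ m} (finite_finvSet P _),
    ← Set.ncard_inter_add_ncard_sdiff_eq_ncard _ {p | p.1 ∈ m' ∧ p.2 ∈ m'} (finite_finvSet P _),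
    finvSet_append_inter_of_nodup P hnd, finvSet_append_inter_of_nodup P hnd',
    finvSet_append_sdiff_of_perm P hm, h]

end FakeInversions

theorem KnuthTriple.perm_and_ncard_finvSet_eq {P : ℕ → ℕ → Prop} {x y : ℕ × ℕ × ℕ}
    (h : KnuthTriple P x y) :
    [x.1, x.2.1, x.2.2] ~ [y.1, y.2.1, y.2.2] ∧
      (finvSet P [x.1, x.2.1, x.2.2]).ncard = (finvSet P [y.1, y.2.1, y.2.2]).ncard := by
  obtain ⟨a, b, c, hab, hbc, hac, hcase⟩ := h
  have hac' := hab.trans hbc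
  rcases hcase with ⟨h₁, h₂, h | h⟩ | ⟨h₁, h₂, h | h | h | h⟩ | ⟨h₁, h₂, h | h | h | h⟩ |
      ⟨h₁, h₂, h | h | h | h⟩ <;>
    obtain ⟨rfl, rfl⟩ := Prod.mk.inj h <;>
    refine ⟨by grind [Perm.swap, Perm.cons, Perm.trans], ?_⟩ <;>
    simp [finvSet_triple, Set.insert_inter_of_mem, Set.insert_inter_of_notMem,
      incomp_comm (a := b) (b := a), incomp_comm (a := c) (b := b), incomp_comm (a := c) (b := a),
      not_incomp_of_rel, hab.not_gt, hbc.not_gt, hac'.not_gt, hab, hbc, hac', hac, h₁, h₂]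

theorem stmt11_general (n : ℕ) (P : ℕ → ℕ → Prop)
    (w w' : List ℕ) (hperm : w.Perm (List.range' 1 n))
    (hmove : KnuthMoveL P w w') :
    (finvSet P w).ncard = (finvSet P w').ncard := by
  obtain ⟨l₁, l₂, x₁, x₂, x₃, y₁, y₂, y₃, rfl, rfl, htriple⟩ := hmove
  obtain ⟨hperm_triple, hncard⟩ := htriple.perm_and_ncard_finvSet_eq
  exact ncard_finvSet_append_eq P hperm_triple (hperm.nodup_iff.mpr (nodup_range' ..)) hncard

/-- A single P-Knuth move preserves the fake P-inversion number. -/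
theorem stmt11 (n : ℕ) (P : ℕ → ℕ → Prop) (hP : NUIO n P)
    (w w' : List ℕ) (hperm : w.Perm (List.range' 1 n))
    (hmove : KnuthMoveL P w w') :
    (finvSet P w).ncard = (finvSet P w').ncard :=
  stmt11_general n P w w' hperm hmove
end

section
/- Let P be a natural unit interval order on [1,n] in which no one is climbing a ladder, and suppose {a_1,…,a_k} is a ladder in P with a_1 < … < a_k, x ∉ {a_1,…,a_k}, and a_1 ≺_P x. Then a_i ≺_P x for all i ≤ k−3, and a_i < x for all i ≤ k−2. -/
lemma chain_ladder (P : ℕ → ℕ → Prop) (k j : ℕ) (a : ℕ → ℕ) (hj : j ≤ k)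
    (hmono : ∀ i j, 1 ≤ i → i < j → j ≤ k → a i < a j)
    (hinc : ∀ i, 1 ≤ i → i + 1 ≤ k → Incomp P (a i) (a (i + 1)))
    (hcomp : ∀ i j, 1 ≤ i → i + 2 ≤ j → j ≤ k → P (a i) (a j)) :
    IsLadderSet P ((Finset.Icc 1 j).image a) := by
  have hinv : ∀ p q, 1 ≤ p → p ≤ j → 1 ≤ q → q ≤ j → a p < a q → p < q := by
    intro p q hp1 hpj hq1 hqj hlt
    by_contra h
    push_neg at h
    rcases lt_or_eq_of_le h with h' | h'
    · exact absurd (hmono q p hq1 h' (hpj.trans hj)) (by omega)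
    · subst h'; exact lt_irrefl _ hlt
  intro u hu v hv huv
  simp only [Finset.mem_image, Finset.mem_Icc] at hu hv
  obtain ⟨p, ⟨hp1, hpj⟩, rfl⟩ := hu
  obtain ⟨q, ⟨hq1, hqj⟩, rfl⟩ := hv
  have hpq : p < q := hinv p q hp1 hpj hq1 hqj huv
  constructor
  · intro hno
    have hq : q = p + 1 := by
      by_contra hne
      have h2 : p + 2 ≤ q := by omega
      refine hno (a (p+1)) ?_ ⟨hmono p (p+1) hp1 (by omega) (by omega),
        hmono (p+1) q (by omega) (by omega) (hqj.trans hj)⟩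
      simp only [Finset.mem_image, Finset.mem_Icc]
      exact ⟨p+1, ⟨by omega, by omega⟩, rfl⟩
    subst hq
    exact hinc p hp1 (by omega)
  · rintro ⟨z, hz, hz1, hz2⟩
    simp only [Finset.mem_image, Finset.mem_Icc] at hz
    obtain ⟨r, ⟨hr1, hrj⟩, rfl⟩ := hz
    have h1 : p < r := hinv p r hp1 hpj hr1 hrj hz1
    have h2 : r < q := hinv r q hr1 hrj hq1 hqj hz2
    exact hcomp p q hp1 (by omega) (hqj.trans hj)

lemma four_ladder (P : ℕ → ℕ → Prop) (w1 w2 w3 w4 : ℕ)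
    (h12 : w1 < w2) (h23 : w2 < w3) (h34 : w3 < w4)
    (i12 : Incomp P w1 w2) (i23 : Incomp P w2 w3) (i34 : Incomp P w3 w4)
    (p13 : P w1 w3) (p24 : P w2 w4) (p14 : P w1 w4) :
    IsLadderSet P ({w1, w2, w3, w4} : Finset ℕ) := by
  intro u hu v hv huv
  simp only [Finset.mem_insert, Finset.mem_singleton] at hu hv
  have hm2 : w2 ∈ ({w1, w2, w3, w4} : Finset ℕ) := by simp
  have hm3 : w3 ∈ ({w1, w2, w3, w4} : Finset ℕ) := by simp
  constructor
  · intro hno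
    rcases hu with h | h | h | h <;> rcases hv with h' | h' | h' | h' <;>
      rw [h, h'] at hno huv ⊢ <;>
      first
      | exact i12 | exact i23 | exact i34 | omega
      | exact absurd ⟨by omega, by omega⟩ (hno w2 hm2)
      | exact absurd ⟨by omega, by omega⟩ (hno w3 hm3)
  · rintro ⟨z, hz, hz1, hz2⟩
    simp only [Finset.mem_insert, Finset.mem_singleton] at hz
    rcases hu with h | h | h | h <;> rcases hv with h' | h' | h' | h' <;>
      rcases hz with hz | hz | hz | hz <;>
      rw [h] at hz1 <;> rw [h'] at hz2 <;> rw [hz] at hz1 hz2 <;> rw [h, h'] <;>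
      first
      | exact p13 | exact p24 | exact p14 | omega
/-- If no one is climbing a ladder in P, a_1 < … < a_k is a ladder, x is outside it and
a_1 ≺_P x, then a_i ≺_P x for i ≤ k-3 and a_i < x for i ≤ k-2. -/
theorem stmt12 (n k : ℕ) (P : ℕ → ℕ → Prop) (hP : NUIO n P)
    (hclimb : ¬ Climbing n P)
    (a : ℕ → ℕ) (x : ℕ)
    (hadom : ∀ i, 1 ≤ i → i ≤ k → a i ∈ Finset.Icc 1 n)
    (hxdom : x ∈ Finset.Icc 1 n)
    (hk : 1 ≤ k) (hlad : LadderEnum P k a)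
    (hxout : ∀ i, 1 ≤ i → i ≤ k → a i ≠ x)
    (h1 : P (a 1) x) :
    (∀ i, 1 ≤ i → i ≤ k - 3 → P (a i) x) ∧
    (∀ i, 1 ≤ i → i ≤ k - 2 → a i < x) := by
  obtain ⟨hirr, htrans, hlt, hnat⟩ := hP
  obtain ⟨hmono, hinc, hcomp⟩ := hlad
  -- Fact (*): x is never below any ladder element
  have hstar : ∀ j, 1 ≤ j → j ≤ k → ¬ P x (a j) := by
    intro j hj1 hjk hpx
    apply hclimb
    refine ⟨x, (Finset.Icc 1 j).image a, hxdom, ?_,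
      chain_ladder P k j a hjk hmono hinc hcomp, ?_, a 1, ?_, a j, ?_, ?_, ?_, h1, hpx⟩
    · intro z hz
      simp only [Finset.mem_image, Finset.mem_Icc] at hz
      obtain ⟨r, ⟨hr1, hrj⟩, rfl⟩ := hz
      exact hadom r hr1 (hrj.trans hjk)
    · simp only [Finset.mem_image, Finset.mem_Icc, not_exists]
      rintro r ⟨⟨hr1, hrj⟩, hre⟩
      exact hxout r hr1 (hrj.trans hjk) hre
    · simp only [Finset.mem_image, Finset.mem_Icc]
      exact ⟨1, ⟨le_refl 1, hj1⟩, rfl⟩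
    · simp only [Finset.mem_image, Finset.mem_Icc]
      exact ⟨j, ⟨hj1, le_refl j⟩, rfl⟩
    · intro z hz
      simp only [Finset.mem_image, Finset.mem_Icc] at hz
      obtain ⟨r, ⟨hr1, hrj⟩, rfl⟩ := hz
      rcases eq_or_lt_of_le hr1 with h | h
      · rw [← h]
      · exact (hmono 1 r (le_refl 1) h (hrj.trans hjk)).le
    · intro z hz
      simp only [Finset.mem_image, Finset.mem_Icc] at hz
      obtain ⟨r, ⟨hr1, hrj⟩, rfl⟩ := hz
      rcases eq_or_lt_of_le hrj with h | h
      · rw [h]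
      · exact (hmono r j hr1 h hjk).le
  -- Claim A: a i ≺ x for i ≤ k - 3
  have keyA : ∀ i, 1 ≤ i → i ≤ k - 3 → P (a i) x := by
    intro i h1i
    induction i, h1i using Nat.le_induction with
    | base => intro _; exact h1
    | succ i h1i IH =>
      intro hik
      have hik' : i + 4 ≤ k := by omega
      have hPix : P (a i) x := IH (by omega)
      by_contra hnot
      have hincx1 : Incomp P (a (i+1)) x :=
        ⟨hxout (i+1) (by omega) (by omega), hnot, hstar (i+1) (by omega) (by omega)⟩
      -- a (i+2) ≺ x is impossible
      have hn2 : ¬ P (a (i+2)) x := by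
        intro h2
        have h12 := hinc (i+1) (by omega) (by omega)
        have := hnat (a (i+1)) (a (i+2)) x (hadom (i+1) (by omega) (by omega))
          (hadom (i+2) (by omega) (by omega)) hxdom (hlt _ _ h2) h2 h12 hincx1
        exact absurd (hmono (i+1) (i+2) (by omega) (by omega) (by omega)) (by omega)
      have hn4 : ¬ P (a (i+4)) x := by
        intro h4
        exact hn2 (htrans _ _ _ (hcomp (i+2) (i+4) (by omega) (by omega) (by omega)) h4)
      have hincx2 : Incomp P x (a (i+2)) :=
        ⟨fun h => hxout (i+2) (by omega) (by omega) h.symm,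
          hstar (i+2) (by omega) (by omega), hn2⟩
      have hincx4 : Incomp P x (a (i+4)) :=
        ⟨fun h => hxout (i+4) (by omega) (by omega) h.symm,
          hstar (i+4) (by omega) (by omega), hn4⟩
      have hp24 : P (a (i+2)) (a (i+4)) := hcomp (i+2) (i+4) (by omega) (by omega) (by omega)
      have hbound := hnat x (a (i+2)) (a (i+4)) hxdom (hadom (i+2) (by omega) (by omega))
        (hadom (i+4) (by omega) (by omega))
        (hmono (i+2) (i+4) (by omega) (by omega) (by omega)) hp24 hincx2 hincx4
      -- now a(i+2) < x < a(i+4); build the climbing configuration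
      have hx1 : a (i+1) < x := lt_trans (hmono (i+1) (i+2) (by omega) (by omega) (by omega))
        hbound.1
      apply hclimb
      have hi34 : Incomp P x (a (i+4)) := hincx4
      refine ⟨a (i+2), ({a i, a (i+1), x, a (i+4)} : Finset ℕ),
        hadom (i+2) (by omega) (by omega), ?_,
        four_ladder P (a i) (a (i+1)) x (a (i+4))
          (hmono i (i+1) h1i (by omega) (by omega)) hx1 hbound.2
          (hinc i h1i (by omega)) hincx1 hi34
          hPix (hcomp (i+1) (i+4) (by omega) (by omega) (by omega))
          (hcomp i (i+4) h1i (by omega) (by omega)),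
        ?_, a i, ?_, a (i+4), ?_, ?_, ?_,
        hcomp i (i+2) h1i (by omega) (by omega), hp24⟩
      · intro z hz
        simp only [Finset.mem_insert, Finset.mem_singleton] at hz
        rcases hz with rfl | rfl | rfl | rfl
        · exact hadom i h1i (by omega)
        · exact hadom (i+1) (by omega) (by omega)
        · exact hxdom
        · exact hadom (i+4) (by omega) (by omega)
      · simp only [Finset.mem_insert, Finset.mem_singleton, not_or]
        refine ⟨?_, ?_, ?_, ?_⟩
        · exact fun h => absurd (hmono i (i+2) h1i (by omega) (by omega)) (by omega)
        · exact fun h => absurd (hmono (i+1) (i+2) (by omega) (by omega) (by omega)) (by omega)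
        · exact fun h => absurd hbound.1 (by omega)
        · exact fun h => absurd (hmono (i+2) (i+4) (by omega) (by omega) (by omega)) (by omega)
      · simp
      · simp
      · intro z hz
        simp only [Finset.mem_insert, Finset.mem_singleton] at hz
        have := hmono i (i+1) h1i (by omega) (by omega)
        have := hmono i (i+4) h1i (by omega) (by omega)
        have := hx1
        rcases hz with rfl | rfl | rfl | rfl <;> omega
      · intro z hz
        simp only [Finset.mem_insert, Finset.mem_singleton] at hz
        have := hmono i (i+4) h1i (by omega) (by omega)
        have := hmono (i+1) (i+4) (by omega) (by omega) (by omega)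
        have := hbound.2
        rcases hz with rfl | rfl | rfl | rfl <;> omega
  refine ⟨keyA, ?_⟩
  -- Claim B: a i < x for i ≤ k - 2
  intro i h1i hik
  by_cases hsmall : i ≤ k - 3
  · exact hlt _ _ (keyA i h1i hsmall)
  · have hieq : i + 2 = k := by omega
    by_cases hPi : P (a i) x
    · exact hlt _ _ hPi
    · have hpik : P (a i) (a k) := hcomp i k h1i (by omega) (le_refl k)
      have hnk : ¬ P (a k) x := fun h => hPi (htrans _ _ _ hpik h)
      have hinci : Incomp P x (a i) :=
        ⟨fun h => hxout i h1i (by omega) h.symm, hstar i h1i (by omega), hPi⟩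
      have hinck : Incomp P x (a k) :=
        ⟨fun h => hxout k (by omega) (le_refl k) h.symm, hstar k (by omega) (le_refl k), hnk⟩
      exact (hnat x (a i) (a k) hxdom (hadom i h1i (by omega)) (hadom k (by omega) (le_refl k))
        (hmono i k h1i (by omega) (le_refl k)) hpik hinci hinck).1
end

section
/- Let P be a natural unit interval order and suppose {a_1,…,a_k} is a ladder in P with a_1 < … < a_k, k ≥ 2, and b satisfies a_k < b with b and a_k P-incomparable. Then either {a_1,…,a_k,b} or {a_1,…,a_{k−1},b} is a ladder in P. -/
lemma extend_aux (P : ℕ → ℕ → Prop) (k m : ℕ) (a : ℕ → ℕ) (b : ℕ)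
    (hlad : LadderEnum P k a) (hm1 : 1 ≤ m) (hmk : m ≤ k)
    (hmb : a m < b) (hincm : Incomp P (a m) b)
    (hPib : ∀ i, 1 ≤ i → i + 1 ≤ m → P (a i) b) :
    IsLadderSet P (insert b ((Finset.Icc 1 m).image a)) := by
  obtain ⟨hmono, hconsec, hcomp⟩ := hlad
  have hlt : ∀ i, 1 ≤ i → i ≤ m → a i < b := by
    intro i h1 h2
    rcases eq_or_lt_of_le h2 with h | h
    · rwa [h]
    · exact lt_trans (hmono i m h1 h hmk) hmb
  have hmem : ∀ x ∈ insert b ((Finset.Icc 1 m).image a),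
      x = b ∨ ∃ i, 1 ≤ i ∧ i ≤ m ∧ a i = x := by
    intro x hx
    rcases Finset.mem_insert.1 hx with h | h
    · exact Or.inl h
    · obtain ⟨i, hi, hix⟩ := Finset.mem_image.1 h
      rw [Finset.mem_Icc] at hi
      exact Or.inr ⟨i, hi.1, hi.2, hix⟩
  have hmem' : ∀ i, 1 ≤ i → i ≤ m → a i ∈ insert b ((Finset.Icc 1 m).image a) := by
    intro i h1 h2
    exact Finset.mem_insert_of_mem (Finset.mem_image.2 ⟨i, Finset.mem_Icc.2 ⟨h1, h2⟩, rfl⟩)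
  have hidx : ∀ i j, 1 ≤ i → i ≤ m → 1 ≤ j → j ≤ m → a i < a j → i < j := by
    intro i j h1 h2 h3 h4 h5
    by_contra h
    push_neg at h
    rcases eq_or_lt_of_le h with h' | h'
    · subst h'; exact lt_irrefl _ h5
    · exact absurd h5 (not_lt.2 (le_of_lt (hmono j i h3 h' (le_trans h2 hmk))))
  intro x hx y hy hxy
  rcases hmem x hx with rfl | ⟨i, hi1, hi2, rfl⟩
  · -- x = b, impossible since b is maximal
    exfalso
    rcases hmem y hy with rfl | ⟨j, hj1, hj2, rfl⟩
    · exact lt_irrefl _ hxy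
    · exact absurd hxy (not_lt.2 (le_of_lt (hlt j hj1 hj2)))
  · rcases hmem y hy with rfl | ⟨j, hj1, hj2, rfl⟩
    · -- y = b
      constructor
      · intro hz
        rcases eq_or_lt_of_le hi2 with h | h
        · rw [h]; exact hincm
        · exact absurd ⟨hmono i m hi1 h hmk, hmb⟩ (hz (a m) (hmem' m hm1 le_rfl))
      · intro ⟨z, hz, hz1, hz2⟩
        rcases eq_or_lt_of_le hi2 with h | h
        · exfalso
          rcases hmem z hz with rfl | ⟨l, hl1, hl2, rfl⟩
          · exact lt_irrefl _ hz2
          · have := hidx i l hi1 hi2 hl1 hl2 hz1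
            omega
        · exact hPib i hi1 h
    · -- y = a j
      have hij : i < j := hidx i j hi1 hi2 hj1 hj2 hxy
      constructor
      · intro hz
        have hj : j = i + 1 := by
          by_contra h
          have h2 : i + 2 ≤ j := by omega
          exact hz (a (i + 1)) (hmem' (i + 1) (by omega) (by omega))
            ⟨hmono i (i + 1) hi1 (by omega) (by omega),
             hmono (i + 1) j (by omega) (by omega) (le_trans hj2 hmk)⟩
        subst hj
        exact hconsec i hi1 (le_trans hj2 hmk)
      · intro ⟨z, hz, hz1, hz2⟩
        rcases hmem z hz with rfl | ⟨l, hl1, hl2, rfl⟩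
        · exact absurd hz2 (not_lt.2 (le_of_lt (hlt j hj1 hj2)))
        · have h1 : i < l := hidx i l hi1 hi2 hl1 hl2 hz1
          have h2 : l < j := hidx l j hl1 hl2 hj1 hj2 hz2
          exact hcomp i j hi1 (by omega) (le_trans hj2 hmk)

/-- If a_1 < … < a_k is a ladder (k ≥ 2) and b > a_k is P-incomparable to a_k, then
either {a_1,…,a_k,b} or {a_1,…,a_{k-1},b} is a ladder in P. -/
theorem stmt13 (n k : ℕ) (P : ℕ → ℕ → Prop) (hP : NUIO n P)
    (a : ℕ → ℕ) (b : ℕ)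
    (hadom : ∀ i, 1 ≤ i → i ≤ k → a i ∈ Finset.Icc 1 n)
    (hbdom : b ∈ Finset.Icc 1 n)
    (hk : 2 ≤ k) (hlad : LadderEnum P k a)
    (hab : a k < b) (hinc : Incomp P (a k) b) :
    IsLadderSet P (insert b ((Finset.Icc 1 k).image a)) ∨
    IsLadderSet P (insert b ((Finset.Icc 1 (k - 1)).image a)) := by
  have L1 : ∀ i, 1 ≤ i → i + 2 ≤ k → P (a i) b := by
    intro i h1 h2
    by_contra hni
    have hik : a i < a k := hlad.1 i k h1 (by omega) le_rfl
    have hib : a i < b := lt_trans hik hab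
    have hnbi : ¬ P b (a i) := fun h => absurd (hP.2.2.1 _ _ h) (by omega)
    have hinc1 : Incomp P b (a i) := ⟨ne_of_gt hib, hnbi, hni⟩
    have hinc2 : Incomp P b (a k) := ⟨ne_of_gt hab, hinc.2.2, hinc.2.1⟩
    have := hP.2.2.2 b (a i) (a k) hbdom (hadom i h1 (by omega)) (hadom k (by omega) le_rfl)
      hik (hlad.2.2 i k h1 h2 le_rfl) hinc1 hinc2
    omega
  by_cases hc : P (a (k - 1)) b
  · left
    apply extend_aux P k k a b hlad (by omega) le_rfl hab hinc
    intro i h1 h2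
    rcases eq_or_lt_of_le h2 with h | h
    · have : i = k - 1 := by omega
      rw [this]; exact hc
    · exact L1 i h1 (by omega)
  · right
    have h1k : a (k - 1) < a k := hlad.1 (k - 1) k (by omega) (by omega) le_rfl
    have hlb : a (k - 1) < b := lt_trans h1k hab
    apply extend_aux P k (k - 1) a b hlad (by omega) (by omega) hlb
      ⟨ne_of_lt hlb, hc, fun h => absurd (hP.2.2.1 _ _ h) (by omega)⟩
    intro i h1 h2
    exact L1 i h1 (by omega)
end

section
/- Let P be a natural unit interval order with b_1 ≺_P b_2 ≺_P ⋯ ≺_P b_k and a < b_1. Then the words a b_k b_{k−1} ⋯ b_1 and b_k ⋯ b_2 a b_1 are P-Knuth equivalent. -/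
/-- If b_1 ≺_P b_2 ≺_P ⋯ ≺_P b_k and a < b_1, then the words a b_k ⋯ b_1 and
b_k ⋯ b_2 a b_1 are P-Knuth equivalent. -/
theorem stmt15 (n k : ℕ) (P : ℕ → ℕ → Prop) (hP : NUIO n P)
    (a : ℕ) (b : ℕ → ℕ)
    (hadom : a ∈ Finset.Icc 1 n)
    (hbdom : ∀ i, 1 ≤ i → i ≤ k → b i ∈ Finset.Icc 1 n)
    (hk : 1 ≤ k)
    (hchain : ∀ i, 1 ≤ i → i + 1 ≤ k → P (b i) (b (i + 1)))
    (ha : a < b 1) :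
    Relation.EqvGen (KnuthMoveL P)
      (a :: (List.range' 1 k).reverse.map b)
      (((List.range' 2 (k - 1)).reverse.map b) ++ [a, b 1]) := by
  obtain ⟨hirr, htrans, hlt, hint⟩ := hP
  -- a < b i
  have hab : ∀ i, 1 ≤ i → i ≤ k → a < b i := by
    intro i h1 h2
    induction i with
    | zero => omega
    | succ m ih =>
      rcases Nat.eq_or_lt_of_le h1 with h | h
      · have : m = 0 := by omega
        subst this; exact ha
      · have h0 : a < b m := ih (by omega) (by omega)
        have := hlt _ _ (hchain m (by omega) (by omega))
        omega
  have hPb1 : ∀ i, 2 ≤ i → i ≤ k → P (b 1) (b i) := by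
    intro i h2 hk'
    induction i with
    | zero => omega
    | succ m ih =>
      rcases Nat.lt_or_ge m 2 with h | h
      · have : m = 1 := by omega
        subst this; exact hchain 1 le_rfl (by omega)
      · exact htrans _ _ _ (ih h (by omega)) (hchain m (by omega) (by omega))
  have hPa : ∀ i, 2 ≤ i → i ≤ k → P a (b i) := by
    intro i h2 hk'
    by_cases h1 : P a (b 1)
    · exact htrans _ _ _ h1 (hPb1 i h2 hk')
    · by_contra hcon
      have hlt1 : a < b 1 := ha
      have hlti : a < b i := hab i (by omega) hk'
      have hinc1 : Incomp P a (b 1) :=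
        ⟨by omega, h1, fun h => by have := hlt _ _ h; omega⟩
      have hinci : Incomp P a (b i) :=
        ⟨by omega, hcon, fun h => by have := hlt _ _ h; omega⟩
      have h1i := hPb1 i h2 hk'
      have := hint a (b 1) (b i) hadom (hbdom 1 le_rfl hk) (hbdom i (by omega) hk')
        (hlt _ _ h1i) h1i hinc1 hinci
      omega
  have hcase : ∀ i, 1 ≤ i → i ≤ k → P a (b i) ∨ Incomp P a (b i) := by
    intro i h1 h2
    by_cases h : P a (b i)
    · exact Or.inl h
    · have := hab i h1 h2
      exact Or.inr ⟨by omega, h, fun hh => by have := hlt _ _ hh; omega⟩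
  have htriple : ∀ m, m + 2 ≤ k →
      KnuthTriple P (a, b (m+2), b (m+1)) (b (m+2), a, b (m+1)) := by
    intro m hk'
    have hbc : P (b (m+1)) (b (m+2)) := hchain (m+1) (by omega) (by omega)
    refine ⟨a, b (m+1), b (m+2), hab (m+1) (by omega) (by omega), hlt _ _ hbc,
      hPa (m+2) (by omega) hk', ?_⟩
    rcases hcase (m+1) (by omega) (by omega) with h | h
    · exact Or.inr (Or.inr (Or.inr ⟨h, hbc, Or.inr (Or.inr (Or.inl rfl))⟩))
    · exact Or.inr (Or.inr (Or.inl ⟨h, hbc, Or.inr (Or.inr (Or.inl rfl))⟩))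
  set W : ℕ → List ℕ := fun i =>
    ((List.range' (i+1) (k-i)).reverse.map b) ++ a :: ((List.range' 1 i).reverse.map b)
    with hW
  have hmove : ∀ m, m + 2 ≤ k → KnuthMoveL P (W (m+2)) (W (m+1)) := by
    intro m hk'
    refine ⟨(List.range' (m+3) (k-(m+2))).reverse.map b, (List.range' 1 m).reverse.map b,
      a, b (m+2), b (m+1), b (m+2), a, b (m+1), ?_, ?_, htriple m hk'⟩
    · have h1 : List.range' 1 (m+2) = List.range' 1 m ++ [m+1, m+2] := by
        rw [List.range'_1_concat, List.range'_1_concat, Nat.add_comm 1 m,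
          Nat.add_comm 1 (m+1)]
        simp
      simp only [hW, h1, List.reverse_append, List.map_append, List.map_reverse]
      simp [List.append_assoc]
    · have h2 : k - (m+1) = (k - (m+2)) + 1 := by omega
      have h3 : List.range' (m+2) ((k-(m+2))+1) = (m+2) :: List.range' (m+3) (k-(m+2)) := by
        rw [List.range'_succ]
      have h4 : List.range' 1 (m+1) = List.range' 1 m ++ [m+1] := by
        rw [List.range'_1_concat, Nat.add_comm]
      simp only [hW, h2, h3, h4, List.reverse_cons, List.reverse_append, List.map_append,
        List.map_reverse, List.map_cons]
      simp [List.append_assoc]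
  have hchainW : ∀ j, 1 ≤ j → j ≤ k → Relation.EqvGen (KnuthMoveL P) (W j) (W 1) := by
    intro j h1 h2
    induction j with
    | zero => omega
    | succ m ih =>
      rcases Nat.eq_or_lt_of_le h1 with h | h
      · have : m = 0 := by omega
        subst this; exact Relation.EqvGen.refl _
      · have hm : 1 ≤ m := by omega
        obtain ⟨p, rfl⟩ : ∃ p, m = p + 1 := ⟨m - 1, by omega⟩
        exact Relation.EqvGen.trans _ _ _
          (Relation.EqvGen.rel _ _ (hmove p (by omega)))
          (ih (by omega) (by omega))
  have e1 : (a :: (List.range' 1 k).reverse.map b) = W k := by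
    simp [hW]
  have e2 : (((List.range' 2 (k - 1)).reverse.map b) ++ [a, b 1]) = W 1 := by
    simp [hW]
  rw [e1, e2]
  exact hchainW k hk le_rfl
end

section
/- Let P be a natural unit interval order with c_1 ≺_P c_2 ≺_P ⋯ ≺_P c_l, and suppose for some index i, c_i < a_1 < a_2 < ⋯ < a_m < c_{i+1} and the set {c_i, a_1, …, a_m, c_{i+1}} is a ladder in P. Then the words a_m ⋯ a_1 c_l ⋯ c_1 and c_l ⋯ c_1 a_m ⋯ a_1 are P-Knuth equivalent. -/
/-!
Put `x 0 = c i`, `x j = a j` for `1 ≤ j ≤ m` and `x (m + 1) = c (i + 1)`, and split the chain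
word as `hi · c_{i+1} c_i · lo`. Every `a_j` lies below every letter of `hi` and above every
letter of `lo` (for `a_m ≺ c_{i+2}` and `c_{i-1} ≺ a_1` this is the unit interval axiom), so the
block `a_m ⋯ a_1` can be carried across `hi` and `lo` by the moves `u y z ↔ y u z`
(`y` above `u` and `z`) and `w y v ↔ w v y` (`v` below `w` and `y`). What remains is
`a_m ⋯ a_1 c_{i+1} c_i ≡ c_{i+1} c_i a_m ⋯ a_1`: carry `c_{i+1}` left across `a_{m-1} ⋯ a_1`, let
the ladder moves `x_j x_{j+1} x_{j-1} ↔ x_{j+1} x_{j-1} x_j` turn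
`a_m c_{i+1} a_{m-1} ⋯ a_1 c_i` into `c_{i+1} a_m ⋯ a_2 c_i a_1`, and carry `c_i` left across
`a_m ⋯ a_2`.
-/

open List Relation

abbrev KnuthEquiv (P : ℕ → ℕ → Prop) : List ℕ → List ℕ → Prop :=
  EqvGen (KnuthMoveL P)

namespace KnuthEquiv

variable {P : ℕ → ℕ → Prop}

theorem refl (w : List ℕ) : KnuthEquiv P w w := EqvGen.refl w

theorem trans {u v w : List ℕ} (h₁ : KnuthEquiv P u v) (h₂ : KnuthEquiv P v w) :
    KnuthEquiv P u w :=
  EqvGen.trans _ _ _ h₁ h₂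

instance : Trans (KnuthEquiv P) (KnuthEquiv P) (KnuthEquiv P) := ⟨trans⟩

theorem append_append {w w' : List ℕ} (h : KnuthEquiv P w w') (p s : List ℕ) :
    KnuthEquiv P (p ++ w ++ s) (p ++ w' ++ s) := by
  induction h with
  | rel u v h =>
    obtain ⟨l₁, l₂, x₁, x₂, x₃, y₁, y₂, y₃, rfl, rfl, h⟩ := h
    exact EqvGen.rel _ _ ⟨p ++ l₁, l₂ ++ s, x₁, x₂, x₃, y₁, y₂, y₃, by simp, by simp, h⟩
  | refl u => exact EqvGen.refl _
  | symm u v _ ih => exact EqvGen.symm _ _ ih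
  | trans u v w _ _ ih₁ ih₂ => exact EqvGen.trans _ _ _ ih₁ ih₂

theorem append_left {w w' : List ℕ} (h : KnuthEquiv P w w') (p : List ℕ) :
    KnuthEquiv P (p ++ w) (p ++ w') := by
  simpa using h.append_append p []

theorem cons {w w' : List ℕ} (h : KnuthEquiv P w w') (x : ℕ) :
    KnuthEquiv P (x :: w) (x :: w') :=
  h.append_left [x]

theorem of_knuthTriple {x₁ x₂ x₃ y₁ y₂ y₃ : ℕ}
    (h : KnuthTriple P (x₁, x₂, x₃) (y₁, y₂, y₃)) (p s : List ℕ) :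
    KnuthEquiv P (p ++ x₁ :: x₂ :: x₃ :: s) (p ++ y₁ :: y₂ :: y₃ :: s) :=
  EqvGen.rel _ _ ⟨p, s, x₁, x₂, x₃, y₁, y₂, y₃, by simp, by simp, h⟩

end KnuthEquiv

section Moves

variable {P : ℕ → ℕ → Prop}

theorem Incomp.symm {a b : ℕ} (h : Incomp P a b) : Incomp P b a :=
  ⟨h.1.symm, h.2.2, h.2.1⟩

theorem Incomp.not_reflGen {a b : ℕ} (h : Incomp P a b) : ¬ ReflGen P a b := by
  rw [reflGen_iff]
  exact fun h' => h'.elim (Ne.symm h.1) h.2.1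

theorem knuthTriple_of_ladder {a b c : ℕ} (hab : a < b) (hbc : b < c)
    (hab' : Incomp P a b) (hbc' : Incomp P b c) (hac : P a c) :
    KnuthTriple P (b, c, a) (c, a, b) :=
  ⟨a, b, c, hab, hbc, hac, .inl ⟨hab', hbc', .inl rfl⟩⟩

variable (hlt : ∀ a b, P a b → a < b)
include hlt

theorem not_reflGen_of_lt {a b : ℕ} (h : a < b) : ¬ ReflGen P b a := by
  rw [reflGen_iff]
  rintro (rfl | h')
  · exact lt_irrefl a h
  · exact lt_asymm h (hlt _ _ h')

theorem not_reflGen_of_rel {a b : ℕ} (h : P a b) : ¬ ReflGen P b a :=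
  not_reflGen_of_lt hlt (hlt _ _ h)

theorem knuthTriple_swap_left {u y z : ℕ} (huy : P u y) (hzy : P z y)
    (hzu : ¬ ReflGen P z u) : KnuthTriple P (u, y, z) (y, u, z) := by
  rw [reflGen_iff, not_or] at hzu
  rcases lt_or_gt_of_ne (Ne.symm hzu.1) with h | h
  · have hzu' : Incomp P z u := ⟨Ne.symm hzu.1, hzu.2, fun h' => lt_asymm h (hlt _ _ h')⟩
    exact ⟨z, u, y, h, hlt _ _ huy, hzy, .inr <| .inr <| .inl ⟨hzu', huy, .inl rfl⟩⟩
  · by_cases huz : P u z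
    · exact ⟨u, z, y, h, hlt _ _ hzy, huy,
        .inr <| .inr <| .inr ⟨huz, hzy, .inr <| .inr <| .inl rfl⟩⟩
    · exact ⟨u, z, y, h, hlt _ _ hzy, huy,
        .inr <| .inr <| .inl ⟨⟨hzu.1, huz, hzu.2⟩, hzy, .inr <| .inr <| .inl rfl⟩⟩

theorem knuthTriple_swap_right {w y v : ℕ} (hvy : P v y) (hvw : P v w)
    (hyw : ¬ ReflGen P y w) : KnuthTriple P (w, y, v) (w, v, y) := by
  rw [reflGen_iff, not_or] at hyw
  rcases lt_or_gt_of_ne (Ne.symm hyw.1) with h | h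
  · have hyw' : Incomp P y w := ⟨Ne.symm hyw.1, hyw.2, fun h' => lt_asymm h (hlt _ _ h')⟩
    exact ⟨v, y, w, hlt _ _ hvy, h, hvw, .inr <| .inl ⟨hvy, hyw', .inr <| .inr <| .inl rfl⟩⟩
  · by_cases hwy : P w y
    · exact ⟨v, w, y, hlt _ _ hvw, h, hvy, .inr <| .inr <| .inr ⟨hvw, hwy, .inl rfl⟩⟩
    · exact ⟨v, w, y, hlt _ _ hvw, h, hvy,
        .inr <| .inl ⟨hvw, ⟨hyw.1, hwy, hyw.2⟩, .inl rfl⟩⟩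

end Moves

namespace KnuthEquiv

variable {P : ℕ → ℕ → Prop} (hlt : ∀ a b, P a b → a < b)
include hlt

theorem letter_cross_right {u z : ℕ} {ys : List ℕ} (rest : List ℕ)
    (hys : IsChain (fun p q => P q p) (ys ++ [z])) (hu : ∀ y ∈ ys, P u y)
    (hzu : ¬ ReflGen P z u) :
    KnuthEquiv P (u :: (ys ++ z :: rest)) (ys ++ u :: z :: rest) := by
  induction ys using List.reverseRecOn generalizing z rest with
  | nil => exact refl _
  | append_singleton ys y ih =>
    rw [append_assoc, singleton_append, isChain_append_cons_cons] at hys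
    have huy : P u y := hu y (by simp)
    calc u :: (ys ++ [y] ++ z :: rest) = u :: (ys ++ y :: z :: rest) := by simp
      KnuthEquiv P _ (ys ++ u :: y :: z :: rest) :=
        ih (z :: rest) hys.1 (fun y' hy' => hu y' (by simp [hy'])) (not_reflGen_of_rel hlt huy)
      KnuthEquiv P _ (ys ++ y :: u :: z :: rest) :=
        of_knuthTriple (knuthTriple_swap_left hlt huy hys.2.1 hzu) ys rest
      _ = ys ++ [y] ++ u :: z :: rest := by simp

theorem block_cross_right {z : ℕ} {us ys : List ℕ} (rest : List ℕ)
    (hus : IsChain (fun p q => ¬ ReflGen P q p) (us ++ [z]))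
    (hys : IsChain (fun p q => P q p) (ys ++ [z])) (h : ∀ u ∈ us, ∀ y ∈ ys, P u y) :
    KnuthEquiv P (us ++ ys ++ z :: rest) (ys ++ us ++ z :: rest) := by
  induction us using List.reverseRecOn generalizing z rest with
  | nil => simpa using refl _
  | append_singleton us u ih =>
    rw [append_assoc, singleton_append, isChain_append_cons_cons] at hus
    have hu : ∀ y ∈ ys, P u y := h u (by simp)
    have hys' : IsChain (fun p q => P q p) (ys ++ [u]) :=
      isChain_append.2 ⟨(isChain_append.1 hys).1, isChain_singleton u, fun y hy u' hu' => by
        rw [head?_cons, Option.mem_some_iff] at hu'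
        exact hu' ▸ hu y (mem_of_getLast? hy)⟩
    calc us ++ [u] ++ ys ++ z :: rest = us ++ (u :: (ys ++ z :: rest)) := by simp
      KnuthEquiv P _ (us ++ (ys ++ u :: z :: rest)) :=
        (letter_cross_right hlt rest hys hu hus.2.1).append_left us
      _ = us ++ ys ++ u :: z :: rest := by simp
      KnuthEquiv P _ (ys ++ us ++ u :: z :: rest) :=
        ih (z :: rest) hus.1 hys' (fun u' hu' => h u' (by simp [hu']))
      _ = ys ++ (us ++ [u]) ++ z :: rest := by simp

theorem letter_cross_left {v w : ℕ} {bs : List ℕ} (rest : List ℕ)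
    (hbs : IsChain (fun p q => ¬ ReflGen P q p) (w :: bs)) (hv : ∀ y ∈ bs, P v y)
    (hvw : P v w) :
    KnuthEquiv P (w :: (bs ++ v :: rest)) (w :: v :: (bs ++ rest)) := by
  induction bs generalizing w with
  | nil => exact refl _
  | cons b bs ih =>
    rw [isChain_cons_cons] at hbs
    have hvb : P v b := hv b (by simp)
    calc w :: (b :: bs ++ v :: rest) = w :: b :: (bs ++ v :: rest) := rfl
      KnuthEquiv P _ (w :: b :: v :: (bs ++ rest)) :=
        (ih hbs.2 (fun y hy => hv y (by simp [hy])) hvb).cons w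
      KnuthEquiv P _ (w :: v :: b :: (bs ++ rest)) :=
        of_knuthTriple (knuthTriple_swap_right hlt hvb hvw hbs.1) [] (bs ++ rest)

theorem block_cross_left {w : ℕ} {bs vs : List ℕ} (rest : List ℕ)
    (hvs : IsChain (fun p q => P q p) (w :: vs))
    (hbs : IsChain (fun p q => ¬ ReflGen P q p) (w :: bs)) (h : ∀ v ∈ vs, ∀ y ∈ bs, P v y) :
    KnuthEquiv P (w :: (bs ++ vs ++ rest)) (w :: (vs ++ bs ++ rest)) := by
  induction vs generalizing w with
  | nil => simpa using refl _
  | cons v vs ih =>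
    rw [isChain_cons_cons] at hvs
    have hv : ∀ y ∈ bs, P v y := h v (by simp)
    have hbs' : IsChain (fun p q => ¬ ReflGen P q p) (v :: bs) :=
      isChain_cons.2 ⟨fun y hy => not_reflGen_of_rel hlt (hv y (mem_of_mem_head? hy)),
        (isChain_cons.1 hbs).2⟩
    calc w :: (bs ++ v :: vs ++ rest) = w :: (bs ++ v :: (vs ++ rest)) := by simp
      KnuthEquiv P _ (w :: v :: (bs ++ (vs ++ rest))) :=
        letter_cross_left hlt (vs ++ rest) hbs hv hvs.1
      KnuthEquiv P _ (w :: v :: (vs ++ bs ++ rest)) := by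
        simpa using (ih hvs.2 hbs' (fun v' hv' => h v' (by simp [hv']))).cons w

end KnuthEquiv

namespace NUIO

variable {n : ℕ} {P : ℕ → ℕ → Prop} {p q r : ℕ}

theorem lt (hP : NUIO n P) {a b : ℕ} (h : P a b) : a < b := hP.2.2.1 a b h

theorem trans (hP : NUIO n P) {a b c : ℕ} (hab : P a b) (hbc : P b c) : P a c :=
  hP.2.1 a b c hab hbc

theorem rel_of_incomp_of_rel (hP : NUIO n P) (hp : p ∈ Finset.Icc 1 n)
    (hq : q ∈ Finset.Icc 1 n) (hr : r ∈ Finset.Icc 1 n) (hpq : p < q) (hpq' : Incomp P p q)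
    (hqr : P q r) : P p r := by
  have hqr' := hP.lt hqr
  by_contra hpr
  have hpr' : Incomp P p r := ⟨by omega, hpr, fun h => absurd (hP.lt h) (by omega)⟩
  have := hP.2.2.2 p q r hp hq hr hqr' hqr hpq' hpr'
  omega

theorem rel_of_rel_of_incomp (hP : NUIO n P) (hp : p ∈ Finset.Icc 1 n)
    (hq : q ∈ Finset.Icc 1 n) (hr : r ∈ Finset.Icc 1 n) (hpq : P p q) (hqr : q < r)
    (hqr' : Incomp P q r) : P p r := by
  have hpq' := hP.lt hpq
  by_contra hpr
  have hrp : Incomp P r p := ⟨by omega, fun h => absurd (hP.lt h) (by omega), hpr⟩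
  have := hP.2.2.2 r p q hr hp hq hpq' hpq hrp hqr'.symm
  omega

theorem rel_of_forall_rel_succ (hP : NUIO n P) {c : ℕ → ℕ} {l : ℕ}
    (hc : ∀ j, 1 ≤ j → j + 1 ≤ l → P (c j) (c (j + 1))) {j j' : ℕ} (hj : 1 ≤ j)
    (hjj' : j < j') (hj' : j' ≤ l) : P (c j) (c j') := by
  induction j', hjj' using Nat.le_induction with
  | base => exact hc j hj hj'
  | succ j' hjj' ih => exact hP.trans (ih (by omega)) (hc j' (by omega) hj')

end NUIO

/-- The word `f (s + k - 1) ⋯ f (s + 1) f s`. -/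
def downWord (f : ℕ → ℕ) (s k : ℕ) : List ℕ := (List.range' s k).reverse.map f

section DownWord

variable (f : ℕ → ℕ) (s : ℕ)

theorem downWord_succ (k : ℕ) : downWord f s (k + 1) = f (s + k) :: downWord f s k := by
  simp [downWord, range'_1_concat]

theorem downWord_succ' (k : ℕ) : downWord f s (k + 1) = downWord f (s + 1) k ++ [f s] := by
  simp [downWord, range'_succ]

theorem downWord_add (k k' : ℕ) :
    downWord f s (k + k') = downWord f (s + k) k' ++ downWord f s k := by
  simp [downWord, ← range'_append_1]

variable {f s}

theorem mem_downWord {k y : ℕ} : y ∈ downWord f s k ↔ ∃ j, s ≤ j ∧ j < s + k ∧ f j = y := by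
  simp only [downWord, mem_map, mem_reverse, mem_range'_1, and_assoc]

theorem downWord_congr {g : ℕ → ℕ} {k : ℕ} (h : ∀ j, s ≤ j → j < s + k → f j = g j) :
    downWord f s k = downWord g s k :=
  map_congr_left fun j hj => by
    rw [mem_reverse, mem_range'_1] at hj
    exact h j hj.1 hj.2

theorem isChain_downWord {R : ℕ → ℕ → Prop} {k : ℕ}
    (h : ∀ j, s ≤ j → j + 1 < s + k → R (f (j + 1)) (f j)) :
    IsChain R (downWord f s k) := by
  rw [downWord, map_reverse, isChain_reverse, isChain_map]
  refine (isChain_range' s k 1).imp_of_mem_imp fun j j' hj hj' hjj' => ?_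
  rw [mem_range'_1] at hj hj'
  subst hjj'
  exact h j hj.1 (by omega)

end DownWord

structure IsLadderSeq (P : ℕ → ℕ → Prop) (x : ℕ → ℕ) (k : ℕ) : Prop where
  lt_succ : ∀ j < k, x j < x (j + 1)
  incomp_succ : ∀ j < k, Incomp P (x j) (x (j + 1))
  rel : ∀ j j', j + 2 ≤ j' → j' ≤ k → P (x j) (x j')

namespace IsLadderSeq

variable {n : ℕ} {P : ℕ → ℕ → Prop} {x : ℕ → ℕ} {k r : ℕ}

theorem mono (hx : IsLadderSeq P x k) {k' : ℕ} (hk : k' ≤ k) : IsLadderSeq P x k' :=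
  ⟨fun j hj => hx.lt_succ j (by omega), fun j hj => hx.incomp_succ j (by omega),
    fun j j' hj hj' => hx.rel j j' hj (by omega)⟩

theorem knuthTriple (hx : IsLadderSeq P x k) {j : ℕ} (hj : j + 2 ≤ k) :
    KnuthTriple P (x (j + 1), x (j + 2), x j) (x (j + 2), x j, x (j + 1)) :=
  knuthTriple_of_ladder (hx.lt_succ j (by omega)) (hx.lt_succ (j + 1) (by omega))
    (hx.incomp_succ j (by omega)) (hx.incomp_succ (j + 1) (by omega)) (hx.rel j (j + 2) le_rfl hj)

theorem isChain_downWord (hx : IsLadderSeq P x k) {s k' : ℕ} (hk' : s + k' ≤ k + 1) :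
    IsChain (fun p q => ¬ ReflGen P q p) (downWord x s k') :=
  _root_.isChain_downWord fun j _ hj => (hx.incomp_succ j (by omega)).not_reflGen

theorem strictMonoOn (hx : IsLadderSeq P x k) : StrictMonoOn x (Set.Iic k) :=
  strictMonoOn_Iic_of_lt_succ fun j hj => by
    simpa only [Order.succ_eq_add_one] using hx.lt_succ j hj

theorem lt (hx : IsLadderSeq P x k) {j j' : ℕ} (hjj' : j < j') (hj' : j' ≤ k) : x j < x j' :=
  hx.strictMonoOn (Set.mem_Iic.2 (by omega)) (Set.mem_Iic.2 hj') hjj'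

theorem rel_of_rel_last (hP : NUIO n P) (hx : IsLadderSeq P x (k + 1))
    (hxk : x k ∈ Finset.Icc 1 n) (hxk' : x (k + 1) ∈ Finset.Icc 1 n) (hr : r ∈ Finset.Icc 1 n)
    (h : P (x (k + 1)) r) {j : ℕ} (hj : j ≤ k) : P (x j) r := by
  rcases hj.lt_or_eq with hj | rfl
  · exact hP.trans (hx.rel j (k + 1) (by omega) le_rfl) h
  · exact hP.rel_of_incomp_of_rel hxk hxk' hr (hx.lt_succ j (by omega))
      (hx.incomp_succ j (by omega)) h

theorem rel_of_rel_first (hP : NUIO n P) (hx : IsLadderSeq P x k)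
    (hx0 : x 0 ∈ Finset.Icc 1 n) (hx1 : x 1 ∈ Finset.Icc 1 n) (hr : r ∈ Finset.Icc 1 n)
    (h : P r (x 0)) {j : ℕ} (hj : 1 ≤ j) (hjk : j ≤ k) : P r (x j) := by
  rcases hj.lt_or_eq with hj | rfl
  · exact hP.trans h (hx.rel 0 j (by omega) hjk)
  · exact hP.rel_of_rel_of_incomp hr hx0 hx1 h (hx.lt_succ 0 (by omega))
      (hx.incomp_succ 0 (by omega))

/-- The transposed top pair of the ladder word travels down it, one ladder move at a time. -/
theorem knuthEquiv_bubble (hx : IsLadderSeq P x (k + 2)) :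
    KnuthEquiv P (x (k + 1) :: x (k + 2) :: downWord x 0 (k + 1))
      (x (k + 2) :: (downWord x 2 k ++ [x 0, x 1])) := by
  induction k with
  | zero => exact KnuthEquiv.of_knuthTriple (hx.knuthTriple le_rfl) [] []
  | succ k ih =>
    calc x (k + 2) :: x (k + 3) :: downWord x 0 (k + 2)
        = [] ++ x (k + 2) :: x (k + 3) :: x (k + 1) :: downWord x 0 (k + 1) := by
          simp [downWord_succ]
      KnuthEquiv P _ ([] ++ x (k + 3) :: x (k + 1) :: x (k + 2) :: downWord x 0 (k + 1)) :=
        KnuthEquiv.of_knuthTriple (hx.knuthTriple (j := k + 1) le_rfl) _ _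
      KnuthEquiv P _ (x (k + 3) :: x (k + 2) :: (downWord x 2 k ++ [x 0, x 1])) :=
        (ih (hx.mono (by omega))).cons _
      _ = x (k + 3) :: (downWord x 2 (k + 1) ++ [x 0, x 1]) := by
        simp [downWord_succ, Nat.add_comm]

section Natural

variable (hlt : ∀ a b, P a b → a < b)
include hlt

theorem knuthEquiv_swap_ends (hx : IsLadderSeq P x (k + 2)) :
    KnuthEquiv P (downWord x 1 (k + 1) ++ [x (k + 2), x 0])
      (x (k + 2) :: x 0 :: downWord x 1 (k + 1)) := by
  have htop : P (x 0) (x (k + 2)) := hx.rel 0 (k + 2) (by omega) le_rfl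
  have hbelow : ∀ u ∈ downWord x 1 k, ∀ y ∈ [x (k + 2)], P u y := by
    intro u hu y hy
    obtain ⟨j, hj, hjk, rfl⟩ := mem_downWord.1 hu
    rw [mem_singleton.1 hy]
    exact hx.rel j (k + 2) (by omega) le_rfl
  have habove : ∀ v ∈ [x 0], ∀ y ∈ downWord x 2 k, P v y := by
    intro v hv y hy
    obtain ⟨j, hj, hjk, rfl⟩ := mem_downWord.1 hy
    rw [mem_singleton.1 hv]
    exact hx.rel 0 j hj (by omega)
  have hchain : IsChain (fun p q => ¬ ReflGen P q p) (x (k + 2) :: downWord x 2 k) := by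
    simpa [downWord_succ, Nat.add_comm] using hx.isChain_downWord (s := 2) (k' := k + 1) (by omega)
  calc downWord x 1 (k + 1) ++ [x (k + 2), x 0]
      = x (k + 1) :: (downWord x 1 k ++ [x (k + 2)] ++ x 0 :: []) := by
        simp [downWord_succ, Nat.add_comm]
    KnuthEquiv P _ (x (k + 1) :: ([x (k + 2)] ++ downWord x 1 k ++ x 0 :: [])) :=
      (KnuthEquiv.block_cross_right hlt []
        (by simpa [downWord_succ'] using hx.isChain_downWord (s := 0) (k' := k + 1) (by omega))
        (isChain_pair (R := fun p q => P q p) |>.2 htop) hbelow).cons _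
    _ = x (k + 1) :: x (k + 2) :: downWord x 0 (k + 1) := by simp [downWord_succ']
    KnuthEquiv P _ (x (k + 2) :: (downWord x 2 k ++ [x 0, x 1])) := hx.knuthEquiv_bubble
    _ = x (k + 2) :: (downWord x 2 k ++ [x 0] ++ [x 1]) := by simp
    KnuthEquiv P _ (x (k + 2) :: ([x 0] ++ downWord x 2 k ++ [x 1])) :=
      KnuthEquiv.block_cross_left hlt [x 1] (isChain_pair (R := fun p q => P q p) |>.2 htop)
        hchain habove
    _ = x (k + 2) :: x 0 :: downWord x 1 (k + 1) := by simp [downWord_succ']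

theorem knuthEquiv_append_chain (hx : IsLadderSeq P x (k + 2)) {hi lo : List ℕ}
    (hhi : IsChain (fun p q => P q p) (hi ++ [x (k + 2)]))
    (hlo : IsChain (fun p q => P q p) (x 0 :: lo))
    (hxhi : ∀ u ∈ downWord x 1 (k + 1), ∀ y ∈ hi, P u y)
    (hxlo : ∀ v ∈ lo, ∀ u ∈ downWord x 1 (k + 1), P v u) :
    KnuthEquiv P (downWord x 1 (k + 1) ++ (hi ++ x (k + 2) :: x 0 :: lo))
      (hi ++ x (k + 2) :: x 0 :: lo ++ downWord x 1 (k + 1)) := by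
  have hbelow_top : IsChain (fun p q => ¬ ReflGen P q p) (downWord x 1 (k + 1) ++ [x (k + 2)]) :=
    isChain_append.2 ⟨hx.isChain_downWord (by omega), isChain_singleton _, fun p hp q hq => by
      obtain ⟨j, hj, hjk, rfl⟩ := mem_downWord.1 (mem_of_getLast? hp)
      rw [head?_cons, Option.mem_some_iff] at hq
      exact hq ▸ not_reflGen_of_lt hlt (hx.lt (by omega) le_rfl)⟩
  have hbottom_above : IsChain (fun p q => ¬ ReflGen P q p) (x 0 :: downWord x 1 (k + 1)) := by
    rw [downWord_succ]
    exact isChain_cons_cons.2 ⟨not_reflGen_of_lt hlt (hx.lt (by omega) (by omega)),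
      by simpa [downWord_succ] using hx.isChain_downWord (s := 1) (k' := k + 1) (by omega)⟩
  calc downWord x 1 (k + 1) ++ (hi ++ x (k + 2) :: x 0 :: lo)
      = downWord x 1 (k + 1) ++ hi ++ x (k + 2) :: x 0 :: lo := by simp
    KnuthEquiv P _ (hi ++ downWord x 1 (k + 1) ++ x (k + 2) :: x 0 :: lo) :=
      KnuthEquiv.block_cross_right hlt _ hbelow_top hhi hxhi
    _ = hi ++ (downWord x 1 (k + 1) ++ [x (k + 2), x 0]) ++ lo := by simp
    KnuthEquiv P _ (hi ++ (x (k + 2) :: x 0 :: downWord x 1 (k + 1)) ++ lo) :=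
      (hx.knuthEquiv_swap_ends hlt).append_append hi lo
    _ = hi ++ [x (k + 2)] ++ x 0 :: (downWord x 1 (k + 1) ++ lo ++ []) := by simp
    KnuthEquiv P _ (hi ++ [x (k + 2)] ++ x 0 :: (lo ++ downWord x 1 (k + 1) ++ [])) :=
      (KnuthEquiv.block_cross_left hlt [] hlo hbottom_above hxlo).append_left _
    _ = hi ++ x (k + 2) :: x 0 :: lo ++ downWord x 1 (k + 1) := by simp

end Natural

end IsLadderSeq

theorem knuthEquiv_ladder_chain {n l i m : ℕ} {P : ℕ → ℕ → Prop} (hP : NUIO n P)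
    {c x : ℕ → ℕ} (hcdom : ∀ j, 1 ≤ j → j ≤ l → c j ∈ Finset.Icc 1 n)
    (hcchain : ∀ j, 1 ≤ j → j + 1 ≤ l → P (c j) (c (j + 1))) (hi : 1 ≤ i) (hil : i + 1 ≤ l)
    (hm : 1 ≤ m) (hx : IsLadderSeq P x (m + 1)) (hx0 : x 0 = c i)
    (hxm : x (m + 1) = c (i + 1)) (hxdom : ∀ j, x j ∈ Finset.Icc 1 n) :
    KnuthEquiv P (downWord x 1 m ++ downWord c 1 l) (downWord c 1 l ++ downWord x 1 m) := by
  obtain ⟨k, rfl⟩ : ∃ k, m = k + 1 := ⟨m - 1, by omega⟩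
  obtain ⟨e, rfl⟩ : ∃ e, i = e + 1 := ⟨i - 1, by omega⟩
  obtain ⟨t, rfl⟩ : ∃ t, l = e + 2 + t := ⟨l - (e + 2), by omega⟩
  have hsplit : downWord c 1 (e + 2 + t) =
      downWord c (e + 3) t ++ c (e + 2) :: c (e + 1) :: downWord c 1 e := by
    rw [downWord_add, downWord_succ, downWord_succ]
    simp only [Nat.add_comm 1, Nat.add_assoc]
  rw [hsplit, ← hx0, ← hxm]
  refine hx.knuthEquiv_append_chain (fun _ _ => hP.lt) ?_ ?_ ?_ ?_
  · rw [hxm, ← downWord_succ']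
    exact isChain_downWord fun j hj hj' => hcchain j (by omega) (by omega)
  · rw [hx0, Nat.add_comm e 1, ← downWord_succ]
    exact isChain_downWord fun j hj hj' => hcchain j hj (by omega)
  · intro u hu y hy
    obtain ⟨j, hj, hjk, rfl⟩ := mem_downWord.1 hu
    obtain ⟨j', hj', hjt, rfl⟩ := mem_downWord.1 hy
    exact hx.rel_of_rel_last hP (hxdom _) (hxdom _) (hcdom j' (by omega) (by omega))
      (hxm ▸ hP.rel_of_forall_rel_succ hcchain (by omega) (by omega) (by omega)) (by omega)
  · intro v hv u hu
    obtain ⟨j', hj', hje, rfl⟩ := mem_downWord.1 hv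
    obtain ⟨j, hj, hjk, rfl⟩ := mem_downWord.1 hu
    exact hx.rel_of_rel_first hP (hxdom _) (hxdom _) (hcdom j' hj' (by omega))
      (hx0 ▸ hP.rel_of_forall_rel_succ hcchain hj' (by omega) (by omega)) hj (by omega)

theorem isLadderSeq_of_isLadderSet {P : ℕ → ℕ → Prop} {x : ℕ → ℕ} {k : ℕ}
    (hmono : ∀ j < k, x j < x (j + 1))
    (hlad : IsLadderSet P ((Finset.range (k + 1)).image x)) : IsLadderSeq P x k := by
  have hsm : StrictMonoOn x (Set.Iic k) := strictMonoOn_Iic_of_lt_succ fun j hj => by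
    simpa only [Order.succ_eq_add_one] using hmono j hj
  have hmem : ∀ j ≤ k, x j ∈ (Finset.range (k + 1)).image x := fun j hj =>
    Finset.mem_image_of_mem x (Finset.mem_range.2 (by omega))
  have hlt : ∀ {j j'}, j ≤ k → j' ≤ k → (x j < x j' ↔ j < j') := fun hj hj' =>
    hsm.lt_iff_lt (Set.mem_Iic.2 hj) (Set.mem_Iic.2 hj')
  refine ⟨hmono, fun j hj => ?_, fun j j' hjj' hj' => ?_⟩
  · refine (hlad _ (hmem j hj.le) _ (hmem (j + 1) hj) (hmono j hj)).1 fun z hz hjz => ?_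
    obtain ⟨r, hr, rfl⟩ := Finset.mem_image.1 hz
    rw [Finset.mem_range] at hr
    rw [hlt (by omega) (by omega), hlt (by omega) (by omega)] at hjz
    omega
  · refine (hlad _ (hmem j (by omega)) _ (hmem j' hj') ((hlt (by omega) hj').2 (by omega))).2
      ⟨x (j + 1), hmem _ (by omega), (hlt (by omega) (by omega)).2 (by omega),
        (hlt (by omega) hj').2 (by omega)⟩

section LadderSeq

variable (d : ℕ) (a : ℕ → ℕ) (m q : ℕ)

def ladderSeq (j : ℕ) : ℕ := if j = 0 then d else if j ≤ m then a j else q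

@[simp] theorem ladderSeq_zero : ladderSeq d a m q 0 = d := rfl

@[simp] theorem ladderSeq_succ : ladderSeq d a m q (m + 1) = q := by simp [ladderSeq]

theorem ladderSeq_of_le {j : ℕ} (hj : 1 ≤ j) (hjm : j ≤ m) : ladderSeq d a m q j = a j := by
  simp [ladderSeq, show j ≠ 0 by omega, hjm]

theorem downWord_ladderSeq : downWord (ladderSeq d a m q) 1 m = downWord a 1 m :=
  downWord_congr fun j hj hjm => ladderSeq_of_le d a m q hj (by omega)

theorem ladderSeq_mem {s : Finset ℕ} (hd : d ∈ s) (ha : ∀ j, 1 ≤ j → j ≤ m → a j ∈ s)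
    (hq : q ∈ s) (j : ℕ) : ladderSeq d a m q j ∈ s := by
  unfold ladderSeq
  split_ifs with h0 hjm
  exacts [hd, ha j (by omega) hjm, hq]

theorem image_range_ladderSeq :
    (Finset.range (m + 2)).image (ladderSeq d a m q) =
      insert d (insert q ((Finset.Icc 1 m).image a)) := by
  ext z
  simp only [Finset.mem_insert, Finset.mem_image, Finset.mem_Icc, Finset.mem_range]
  constructor
  · rintro ⟨j, hj, rfl⟩
    unfold ladderSeq
    split_ifs with h0 hjm
    exacts [.inl rfl, .inr (.inr ⟨j, ⟨by omega, hjm⟩, rfl⟩), .inr (.inl rfl)]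
  · rintro (h | h | ⟨j, hj, h⟩)
    · exact ⟨0, by omega, h.symm⟩
    · exact ⟨m + 1, by omega, (ladderSeq_succ d a m q).trans h.symm⟩
    · exact ⟨j, by omega, (ladderSeq_of_le d a m q hj.1 hj.2).trans h⟩

variable {d a m q}

theorem isLadderSeq_ladderSeq {P : ℕ → ℕ → Prop} (hm : 1 ≤ m) (hlow : d < a 1)
    (hainc : ∀ j, 1 ≤ j → j + 1 ≤ m → a j < a (j + 1)) (hhigh : a m < q)
    (hlad : IsLadderSet P (insert d (insert q ((Finset.Icc 1 m).image a)))) :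
    IsLadderSeq P (ladderSeq d a m q) (m + 1) := by
  refine isLadderSeq_of_isLadderSet (fun j hj => ?_) (image_range_ladderSeq d a m q ▸ hlad)
  rcases Nat.eq_zero_or_pos j with rfl | hj0
  · simpa [ladderSeq_of_le d a m q le_rfl hm] using hlow
  rcases (show j + 1 ≤ m ∨ j = m by omega) with hjm | rfl
  · rw [ladderSeq_of_le d a m q hj0 (by omega), ladderSeq_of_le d a m q (by omega) hjm]
    exact hainc j hj0 hjm
  · simpa [ladderSeq_of_le d a j q hj0 le_rfl] using hhigh

end LadderSeq

/-- If c_1 ≺_P ⋯ ≺_P c_l, c_i < a_1 < ⋯ < a_m < c_{i+1}, and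
{c_i, a_1, …, a_m, c_{i+1}} is a ladder in P, then the words a_m ⋯ a_1 c_l ⋯ c_1 and
c_l ⋯ c_1 a_m ⋯ a_1 are P-Knuth equivalent. -/
theorem stmt16 (n l m : ℕ) (P : ℕ → ℕ → Prop) (hP : NUIO n P)
    (c a : ℕ → ℕ) (i : ℕ)
    (hcdom : ∀ j, 1 ≤ j → j ≤ l → c j ∈ Finset.Icc 1 n)
    (hadom : ∀ j, 1 ≤ j → j ≤ m → a j ∈ Finset.Icc 1 n)
    (hcchain : ∀ j, 1 ≤ j → j + 1 ≤ l → P (c j) (c (j + 1)))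
    (hi : 1 ≤ i) (hil : i + 1 ≤ l) (hm : 1 ≤ m)
    (hlow : c i < a 1)
    (hainc : ∀ j, 1 ≤ j → j + 1 ≤ m → a j < a (j + 1))
    (hhigh : a m < c (i + 1))
    (hlad : IsLadderSet P
      (insert (c i) (insert (c (i + 1)) ((Finset.Icc 1 m).image a)))) :
    Relation.EqvGen (KnuthMoveL P)
      (((List.range' 1 m).reverse.map a) ++ ((List.range' 1 l).reverse.map c))
      (((List.range' 1 l).reverse.map c) ++ ((List.range' 1 m).reverse.map a)) := by
  have hx := isLadderSeq_ladderSeq hm hlow hainc hhigh hlad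
  have hxdom := ladderSeq_mem (c i) a m (c (i + 1)) (hcdom i hi (by omega)) hadom
    (hcdom (i + 1) (by omega) hil)
  have := knuthEquiv_ladder_chain hP hcdom hcchain hi hil hm hx (ladderSeq_zero ..)
    (ladderSeq_succ ..) hxdom
  rwa [downWord_ladderSeq] at this
end

section
/- Let P be a natural unit interval order on [1,n]. If w, w' ∈ S_n are connected by a P-Knuth move at position i, and i > 2, then the pair of sets (des_P(w) ∩ {i−2,i−1}, des_P(w') ∩ {i−2,i−1}), as an unordered pair, is never equal to {∅, {i−2,i−1}}; equivalently, if w and w' differ in whether i−2 is a P-descent, then exactly one of i−2, i−1 is a P-descent of w. -/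
lemma knuth_aux (n : ℕ) (P : ℕ → ℕ → Prop) (hP : NUIO n P)
    (d : ℕ) (x y : ℕ × ℕ × ℕ)
    (hd : d ∈ Finset.Icc 1 n)
    (hx1 : x.1 ∈ Finset.Icc 1 n) (hx2 : x.2.1 ∈ Finset.Icc 1 n) (hx3 : x.2.2 ∈ Finset.Icc 1 n)
    (hd1 : d ≠ x.1) (hd2 : d ≠ x.2.1) (hd3 : d ≠ x.2.2)
    (hK : KnuthTriple P x y) :
    ¬ ((¬ P x.1 d ∧ ¬ P x.2.1 x.1 ∧ P y.1 d ∧ P y.2.1 y.1) ∨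
       (P x.1 d ∧ P x.2.1 x.1 ∧ ¬ P y.1 d ∧ ¬ P y.2.1 y.1)) := by
  obtain ⟨a, b, c, hab, hbc, hac, hcase⟩ := hK
  have trans := hP.2.1
  have lt := hP.2.2.1
  have key : ∀ b' c', b' ∈ Finset.Icc 1 n → c' ∈ Finset.Icc 1 n →
      b' < c' → Incomp P b' c' → b' ≠ d → P c' d → P b' d := by
    intro b' c' hb' hc' hlt hI hne hcd
    by_contra h
    have h1 : c' < d := lt _ _ hcd
    have h2 : ¬ P d b' := fun h' => by have := lt _ _ h'; omega
    have := hP.2.2.2 b' c' d hb' hc' hd h1 hcd hI ⟨hne, h, h2⟩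
    omega
  rcases hcase with ⟨hI1, hI2, hxy | hxy⟩ |
    ⟨hp1, hI2, hxy | hxy | hxy | hxy⟩ |
    ⟨hI1, hp2, hxy | hxy | hxy | hxy⟩ |
    ⟨hp1, hp2, hxy | hxy | hxy | hxy⟩ <;>
    rw [Prod.mk.injEq] at hxy <;>
    obtain ⟨rfl, rfl⟩ := hxy <;>
    rintro (⟨A, B, C, D⟩ | ⟨A, B, C, D⟩)
  -- C1a: (b,c,a),(c,a,b)
  · exact A (key b c hx1 hx2 hbc hI2 (Ne.symm hd1) C)
  · exact hI2.2.2 B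
  -- C1b: (c,a,b),(b,c,a)
  · exact B hac
  · exact C (key b c hx3 hx1 hbc hI2 (Ne.symm hd3) A)
  -- C2a: (b,c,a),(b,a,c)
  · exact A C
  · exact C A
  -- C2b: (b,a,c),(b,c,a)
  · exact A C
  · exact C A
  -- C2c: (c,b,a),(c,a,b)
  · exact A C
  · exact C A
  -- C2d: (c,a,b),(c,b,a)
  · exact A C
  · exact C A
  -- C3a: (b,c,a),(c,b,a)
  · exact A (trans _ _ _ hp2 C)
  · exact hP.1 b (trans _ _ _ hp2 B)
  -- C3b: (c,b,a),(b,c,a)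
  · exact B hp2
  · exact C (trans _ _ _ hp2 A)
  -- C3c: (a,c,b),(c,a,b)
  · exact A (trans _ _ _ hac C)
  · have h5 : c < a := lt _ _ B; omega
  -- C3d: (c,a,b),(a,c,b)
  · exact B hac
  · exact C (trans _ _ _ hac A)
  -- C4a: (b,c,a),(b,a,c)
  · exact A C
  · exact C A
  -- C4b
  · exact A C
  · exact C A
  -- C4c: (a,c,b),(c,a,b)
  · exact A (trans _ _ _ hac C)
  · have h5 : c < a := lt _ _ B; omega
  -- C4d
  · exact B hac
  · exact C (trans _ _ _ hac A)

/-- If w, w' ∈ S_n are connected by a P-Knuth move at position i with i > 2, then the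
unordered pair (des_P(w) ∩ {i-2,i-1}, des_P(w') ∩ {i-2,i-1}) is never {∅, {i-2,i-1}}. -/
theorem stmt18 (n : ℕ) (P : ℕ → ℕ → Prop) (hP : NUIO n P)
    (w w' : ℕ → ℕ)
    (hw : Set.BijOn w (Set.Icc 1 n) (Set.Icc 1 n))
    (hw' : Set.BijOn w' (Set.Icc 1 n) (Set.Icc 1 n))
    (i : ℕ) (hi1 : 2 < i) (hi2 : i + 1 ≤ n)
    (hmove : KnuthMoveAt P w w' i) :
    ¬ ((¬ PDes P w (i - 2) ∧ ¬ PDes P w (i - 1) ∧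
          PDes P w' (i - 2) ∧ PDes P w' (i - 1)) ∨
       (PDes P w (i - 2) ∧ PDes P w (i - 1) ∧
          ¬ PDes P w' (i - 2) ∧ ¬ PDes P w' (i - 1))) := by
  obtain ⟨hagree, hK⟩ := hmove
  have hd : w' (i - 2) = w (i - 2) := hagree _ (by omega) (by omega) (by omega)
  have hmem : ∀ j, 1 ≤ j → j ≤ n → w j ∈ Finset.Icc 1 n := fun j h1 h2 => by
    have := hw.mapsTo (Set.mem_Icc.mpr ⟨h1, h2⟩)
    exact Finset.mem_Icc.mpr (Set.mem_Icc.mp this)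
  have hinj : ∀ j, 1 ≤ j → j ≤ n → j ≠ i - 2 → w (i - 2) ≠ w j := by
    intro j h1 h2 hne heq
    have := hw.injOn (Set.mem_Icc.mpr ⟨by omega, by omega⟩) (Set.mem_Icc.mpr ⟨h1, h2⟩) heq
    omega
  simp only [PDes, hd, show i - 2 + 1 = i - 1 from by omega, show i - 1 + 1 = i from by omega]
  exact knuth_aux n P hP (w (i - 2)) (w (i - 1), w i, w (i + 1)) (w' (i - 1), w' i, w' (i + 1))
    (hmem _ (by omega) (by omega)) (hmem _ (by omega) (by omega))
    (hmem _ (by omega) (by omega)) (hmem _ (by omega) (by omega))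
    (hinj _ (by omega) (by omega) (by omega)) (hinj _ (by omega) (by omega) (by omega))
    (hinj _ (by omega) (by omega) (by omega)) hK
end

section
/- Let P be the natural unit interval order P_{(3,1,1),5} on [1,5] (relations 1≺3, 1≺4, 1≺5, 2≺5, 3≺5). Then the permutations 53241 and 53412 are connected by a P-Knuth move, but ght_P(53241) = 2 while ght_P(53412) = 3; hence genuine P-height is not invariant under P-Knuth moves for ladder-climbing orders. -/
/-- (i,j) is a genuine P-inversion of the word w. -/
def GInv (P : ℕ → ℕ → Prop) (w : List ℕ) (i j : ℕ) : Prop :=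
  P j i ∧ Before w i j ∧
  ¬ ∃ ds : List ℕ, (i :: (ds ++ [j])).Sublist w ∧
      (i :: (ds ++ [j])).Chain' (Incomp P)

/-- The word w admits a chain a_1, …, a_k of elements with each (a_i, a_{i+1}) a genuine
P-inversion; the genuine P-height of w is the largest such k. -/
def HasGChain (P : ℕ → ℕ → Prop) (w : List ℕ) (k : ℕ) : Prop :=
  ∃ a : ℕ → ℕ, ∀ i, 1 ≤ i → i < k → GInv P w (a i) (a (i + 1))

/-!
A genuine inversion `(i, j)` needs `j ≺ i`, so a chain of genuine inversions is a descending
chain of `P`. The only chain of length three in `P_{(3,1,1),5}` is `1 ≺ 3 ≺ 5` and none is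
longer, so the genuine height is at most `3`, and it equals `3` exactly when `(5, 3)` and `(3, 1)`
are both genuine. In `53412` they are; in `53241` the subword `321` of pairwise incomparable letters
destroys `(3, 1)`.
-/

instance Incomp.decidableRel {P : ℕ → ℕ → Prop} [DecidableRel P] :
    DecidableRel (Incomp P) := fun a b =>
  inferInstanceAs (Decidable (a ≠ b ∧ ¬ P a b ∧ ¬ P b a))

instance P311.decidableRel : DecidableRel P311 := fun a b =>
  inferInstanceAs (Decidable ((a = 1 ∧ b = 3) ∨ (a = 1 ∧ b = 4) ∨ (a = 1 ∧ b = 5) ∨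
    (a = 2 ∧ b = 5) ∨ (a = 3 ∧ b = 5)))

section GInv

variable {P : ℕ → ℕ → Prop} {w : List ℕ} {i j : ℕ}

theorem GInv.rel (h : GInv P w i j) : P j i := h.1

/-- The last clause of `GInv` as a finite check over the sublists of `w`, which `decide` runs. -/
theorem GInv.of_sublists (hji : P j i) (hij : Before w i j)
    (h : ∀ l ∈ w.sublists, l.head? = some i → l.getLast? = some j →
      ¬ l.IsChain (Incomp P)) :
    GInv P w i j := by
  refine ⟨hji, hij, fun ⟨ds, hsub, hchain⟩ => h _ (List.mem_sublists.2 hsub) rfl ?_ hchain⟩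
  simp [List.getLast?_cons, List.getLast?_append]

theorem not_gInv_of_incomp_path (ds : List ℕ) (hsub : (i :: (ds ++ [j])).Sublist w)
    (hchain : (i :: (ds ++ [j])).IsChain (Incomp P)) : ¬ GInv P w i j :=
  fun h => h.2.2 ⟨ds, hsub, hchain⟩

end GInv

section HasGChain

variable {P : ℕ → ℕ → Prop} {w : List ℕ}

theorem HasGChain.mono {k m : ℕ} (h : HasGChain P w k) (hmk : m ≤ k) : HasGChain P w m :=
  let ⟨a, ha⟩ := h
  ⟨a, fun i hi him => ha i hi (lt_of_lt_of_le him hmk)⟩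

theorem hasGChain_length_of_isChain {l : List ℕ} (hl : l.IsChain (GInv P w)) :
    HasGChain P w l.length := by
  refine ⟨fun i => l.getD (i - 1) 0, fun i hi hil => ?_⟩
  obtain ⟨n, rfl⟩ : ∃ n, i = n + 1 := ⟨i - 1, by omega⟩
  simpa [List.getElem?_eq_getElem (by omega : n < l.length), List.getElem?_eq_getElem hil]
    using hl.getElem n hil

end HasGChain

theorem P311_chain {a b c : ℕ} (hba : P311 b a) (hcb : P311 c b) : a = 5 ∧ b = 3 ∧ c = 1 := by
  unfold P311 at hba hcb
  omega

theorem not_P311_one (a : ℕ) : ¬ P311 a 1 := by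
  unfold P311
  omega

theorem HasGChain.gInv_of_P311 {w : List ℕ} (h : HasGChain P311 w 3) :
    GInv P311 w 5 3 ∧ GInv P311 w 3 1 := by
  obtain ⟨a, ha⟩ := h
  have h₁ := ha 1 le_rfl (by norm_num)
  have h₂ := ha 2 (by norm_num) (by norm_num)
  obtain ⟨e₁, e₂, e₃⟩ := P311_chain h₁.rel h₂.rel
  rw [e₁, e₂] at h₁
  rw [e₂, e₃] at h₂
  exact ⟨h₁, h₂⟩

theorem HasGChain.le_three_of_P311 {w : List ℕ} {k : ℕ} (h : HasGChain P311 w k) : k ≤ 3 := by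
  by_contra! hk
  obtain ⟨a, ha⟩ := h.mono hk
  obtain ⟨-, -, e₃⟩ :=
    P311_chain (ha 1 le_rfl (by norm_num)).rel (ha 2 (by norm_num) (by norm_num)).rel
  exact not_P311_one _ (e₃ ▸ (ha 3 (by norm_num) (by norm_num)).rel)

/-- For P = P_{(3,1,1),5}, the permutations 53241 and 53412 are connected by a P-Knuth
move, yet the genuine P-height of 53241 is 2 while that of 53412 is 3. -/
theorem stmt19 :
    KnuthMoveL P311 [5, 3, 2, 4, 1] [5, 3, 4, 1, 2] ∧
    (HasGChain P311 [5, 3, 2, 4, 1] 2 ∧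
      ∀ k, HasGChain P311 [5, 3, 2, 4, 1] k → k ≤ 2) ∧
    (HasGChain P311 [5, 3, 4, 1, 2] 3 ∧
      ∀ k, HasGChain P311 [5, 3, 4, 1, 2] k → k ≤ 3) := by
  have g53 : GInv P311 [5, 3, 2, 4, 1] 5 3 :=
    .of_sublists (by decide) ⟨[], [], [2, 4, 1], rfl⟩ (by decide)
  have not_g31 : ¬ GInv P311 [5, 3, 2, 4, 1] 3 1 :=
    not_gInv_of_incomp_path [2] (by decide) (by decide)
  have g53' : GInv P311 [5, 3, 4, 1, 2] 5 3 :=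
    .of_sublists (by decide) ⟨[], [], [4, 1, 2], rfl⟩ (by decide)
  have g31' : GInv P311 [5, 3, 4, 1, 2] 3 1 :=
    .of_sublists (by decide) ⟨[5], [4], [2], rfl⟩ (by decide)
  refine ⟨?_, ⟨?_, ?_⟩, ⟨?_, fun k => HasGChain.le_three_of_P311⟩⟩
  · -- the move `241 ↔ 412` of rule (1) with `a, b, c = 1, 2, 4`
    exact ⟨[5, 3], [], 2, 4, 1, 4, 1, 2, rfl, rfl, 1, 2, 4, by decide, by decide, by decide,
      Or.inl ⟨by decide, by decide, Or.inl rfl⟩⟩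
  · exact hasGChain_length_of_isChain (l := [5, 3]) (by simpa using g53)
  · intro k hk
    by_contra! hk3
    exact not_g31 (hk.mono hk3).gInv_of_P311.2
  · exact hasGChain_length_of_isChain (l := [5, 3, 1]) (by simpa using ⟨g53', g31'⟩)
end
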